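/- arXiv:2209.03436 — 7 statements merged into one kernel-verified Lean document; each statement's English description precedes it below -/
import Mathlib

section
/- Let n ≥ 3 and let (n−1)b ≤ a ≤ nb be positive integers. Then the separation number of the complete graph K_n satisfies sep(K_n, a, b) = 2a − nb. -/
/-- The complete graph `K n` is `(a,b,c)`-choosable: for every `c`-separating
`a`-list assignment `L` there is an assignment of `b`-element subsets of the
lists that are pairwise disjoint on (all) edges. -/
def CompleteChoosable (n a b c : ℕ) : Prop :=
  ∀ L : Fin n → Finset ℤ,
    (∀ v, (L v).card = a) →
    (∀ u v : Fin n, u ≠ v → (L u ∩ L v).card ≤ c) →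
    ∃ φ : Fin n → Finset ℤ,
      (∀ v, φ v ⊆ L v ∧ (φ v).card = b) ∧
      ∀ u v : Fin n, u ≠ v → Disjoint (φ u) (φ v)

/-- Hall-based choice lemma: if each list has `a ≥ b` elements and any two distinct
lists have union of size at least `n*b`, then pairwise disjoint `b`-subsets exist. -/
lemma exists_disjoint_subsets (n a b : ℕ) (hba : b ≤ a)
    (L : Fin n → Finset ℤ)
    (hcard : ∀ v, (L v).card = a)
    (hunion : ∀ u v : Fin n, u ≠ v → n * b ≤ ((L u) ∪ (L v)).card) :
    ∃ φ : Fin n → Finset ℤ,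
      (∀ v, φ v ⊆ L v ∧ (φ v).card = b) ∧
      ∀ u v : Fin n, u ≠ v → Disjoint (φ u) (φ v) := by
  classical
  have hall : ∀ S : Finset (Fin n × Fin b),
      S.card ≤ (S.biUnion (fun p => L p.1)).card := by
    intro S
    set T : Finset (Fin n) := S.image Prod.fst with hT
    have hUeq : S.biUnion (fun p => L p.1) = T.biUnion L := by
      ext x
      simp only [Finset.mem_biUnion, hT, Finset.mem_image]
      constructor
      · rintro ⟨p, hp, hx⟩; exact ⟨p.1, ⟨p, hp, rfl⟩, hx⟩
      · rintro ⟨i, ⟨p, hp, rfl⟩, hx⟩; exact ⟨p, hp, hx⟩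
    have hScard : S.card ≤ T.card * b := by
      calc S.card ≤ (T ×ˢ (Finset.univ : Finset (Fin b))).card :=
            Finset.card_le_card (by
              intro p hp
              rw [Finset.mem_product]
              exact ⟨Finset.mem_image.mpr ⟨p, hp, rfl⟩, Finset.mem_univ _⟩)
        _ = T.card * b := by simp [Finset.card_product]
    rw [hUeq]
    rcases Nat.lt_or_ge T.card 2 with hT2 | hT2
    · rcases Nat.lt_or_ge T.card 1 with hT1 | hT1
      · interval_cases h : T.card
        omega
      · have hT1' : T.card = 1 := by omega
        obtain ⟨i, hi⟩ := Finset.card_eq_one.mp hT1'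
        rw [hi]
        simp only [Finset.singleton_biUnion]
        rw [hcard i]
        calc S.card ≤ T.card * b := hScard
          _ = b := by rw [hT1', one_mul]
          _ ≤ a := hba
    · obtain ⟨i, hi, j, hj, hij⟩ := Finset.one_lt_card.mp hT2
      have hsub : L i ∪ L j ⊆ T.biUnion L := by
        intro x hx
        rcases Finset.mem_union.mp hx with hx | hx
        · exact Finset.mem_biUnion.mpr ⟨i, hi, hx⟩
        · exact Finset.mem_biUnion.mpr ⟨j, hj, hx⟩
      have hTn : T.card ≤ n := by
        have := Finset.card_le_univ T
        simpa using this
      calc S.card ≤ T.card * b := hScard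
        _ ≤ n * b := Nat.mul_le_mul_right b hTn
        _ ≤ (L i ∪ L j).card := hunion i j hij
        _ ≤ (T.biUnion L).card := Finset.card_le_card hsub
  obtain ⟨f, hfinj, hf⟩ :=
    (Finset.all_card_le_biUnion_card_iff_exists_injective
      (fun p : Fin n × Fin b => L p.1)).mp hall
  refine ⟨fun v => Finset.image (fun j : Fin b => f (v, j)) Finset.univ, ?_, ?_⟩
  · intro v
    constructor
    · intro x hx
      obtain ⟨j, _, rfl⟩ := Finset.mem_image.mp hx
      exact hf (v, j)
    · rw [Finset.card_image_of_injective _ (fun j j' h => by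
        have := hfinj h; exact (Prod.ext_iff.mp this).2)]
      simp
  · intro u v huv
    rw [Finset.disjoint_left]
    intro x hx hx'
    obtain ⟨j, _, rfl⟩ := Finset.mem_image.mp hx
    obtain ⟨j', _, he⟩ := Finset.mem_image.mp hx'
    have := hfinj he
    exact huv ((Prod.ext_iff.mp this).1.symm)

theorem sep_Kn_high_range (n a b : ℕ) (hn : 3 ≤ n) (hb : 0 < b)
    (hba : (n - 1) * b ≤ a) (hab : a ≤ n * b) :
    IsGreatest {c | c ≤ a ∧ CompleteChoosable n a b c} (2 * a - n * b) := by
  have hba' : (n - 1) * b = n * b - b := by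
    cases n with
    | zero => omega
    | succ m => simp [Nat.succ_sub_one, Nat.succ_mul]
  have hnb2a : n * b ≤ 2 * a := by
    -- 2a ≥ 2(n-1)b ≥ nb since n ≥ 2
    have h1 : n * b ≤ 2 * ((n - 1) * b) := by
      have : n ≤ 2 * (n - 1) := by omega
      calc n * b ≤ 2 * (n - 1) * b := Nat.mul_le_mul_right b this
        _ = 2 * ((n - 1) * b) := by ring
    omega
  have hbA : b ≤ a := by
    have : b ≤ (n - 1) * b := Nat.le_mul_of_pos_left b (by omega)
    omega
  constructor
  · constructor
    · omega
    · intro L hcard hsep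
      apply exists_disjoint_subsets n a b hbA L hcard
      intro u v huv
      have h1 := Finset.card_union_add_card_inter (L u) (L v)
      have h2 := hsep u v huv
      rw [hcard u, hcard v] at h1
      omega
  · rintro c ⟨hca, hch⟩
    by_contra hcon
    push_neg at hcon
    -- hcon : 2 * a - n * b < c
    have hanb : a < n * b := by omega
    set N := n * b - 1 with hN
    set d := N - a with hd
    have hdb : d ≤ b - 1 := by omega
    have hnd : n * d ≤ N := by
      have : n * d ≤ n * (b - 1) := Nat.mul_le_mul_left n hdb
      have h2 : n * (b - 1) = n * b - n := by
        cases b with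
        | zero => omega
        | succ m => simp [Nat.mul_succ]
      omega
    -- blocks
    set C : Fin n → Finset ℕ := fun i => Finset.Ico ((i : ℕ) * d) ((i : ℕ) * d + d) with hC
    have hCsub : ∀ i : Fin n, C i ⊆ Finset.range N := by
      intro i x hx
      rw [Finset.mem_Ico] at hx
      rw [Finset.mem_range]
      have hi : (i : ℕ) + 1 ≤ n := i.2
      have : ((i : ℕ) + 1) * d ≤ n * d := Nat.mul_le_mul_right d hi
      have : (i : ℕ) * d + d ≤ n * d := by rw [← Nat.succ_mul]; exact this
      omega
    have hCcard : ∀ i : Fin n, (C i).card = d := by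
      intro i; simp [hC]
    have hCdisj : ∀ i j : Fin n, i ≠ j → Disjoint (C i) (C j) := by
      intro i j hij
      rw [Finset.disjoint_left]
      intro x hx hx'
      rw [hC, Finset.mem_Ico] at hx hx'
      rcases Nat.lt_or_ge (i : ℕ) (j : ℕ) with h | h
      · have : ((i : ℕ) + 1) * d ≤ (j : ℕ) * d := Nat.mul_le_mul_right d h
        rw [Nat.succ_mul] at this
        omega
      · have hij' : (j : ℕ) < (i : ℕ) := by
          rcases Nat.lt_or_ge (j : ℕ) (i : ℕ) with h' | h'
          · exact h'
          · exact absurd (Fin.ext (by omega)) hij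
        have : ((j : ℕ) + 1) * d ≤ (i : ℕ) * d := Nat.mul_le_mul_right d hij'
        rw [Nat.succ_mul] at this
        omega
    set A : Fin n → Finset ℕ := fun i => Finset.range N \ C i with hA
    set L : Fin n → Finset ℤ := fun i => (A i).image (fun k : ℕ => (k : ℤ)) with hL
    have hinj : Function.Injective (fun k : ℕ => (k : ℤ)) := fun x y h => by
      simpa using h
    have hLcard : ∀ v, (L v).card = a := by
      intro v
      rw [hL]
      rw [Finset.card_image_of_injective _ hinj, hA]
      rw [Finset.card_sdiff_of_subset (hCsub v), Finset.card_range, hCcard]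
      omega
    have hLsep : ∀ u v : Fin n, u ≠ v → (L u ∩ L v).card ≤ c := by
      intro u v huv
      have himg : L u ∩ L v = ((A u ∩ A v)).image (fun k : ℕ => (k : ℤ)) := by
        rw [hL, Finset.image_inter _ _ hinj]
      rw [himg, Finset.card_image_of_injective _ hinj]
      have hAeq : A u ∩ A v = Finset.range N \ (C u ∪ C v) := by
        rw [hA]
        ext x
        simp only [Finset.mem_inter, Finset.mem_sdiff, Finset.mem_union]
        tauto
      rw [hAeq, Finset.card_sdiff_of_subset]
      · rw [Finset.card_union_of_disjoint (hCdisj u v huv), Finset.card_range,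
          hCcard, hCcard]
        omega
      · intro x hx
        rcases Finset.mem_union.mp hx with h | h
        · exact hCsub u h
        · exact hCsub v h
    obtain ⟨φ, hφ1, hφ2⟩ := hch L hLcard hLsep
    -- contradiction via cardinality
    have hsub : ∀ v, φ v ⊆ (Finset.range N).image (fun k : ℕ => (k : ℤ)) := by
      intro v x hx
      have := (hφ1 v).1 hx
      rw [hL] at this
      obtain ⟨k, hk, rfl⟩ := Finset.mem_image.mp this
      exact Finset.mem_image.mpr ⟨k, (Finset.mem_sdiff.mp hk).1, rfl⟩
    have hB : (Finset.univ.biUnion φ).card = n * b := by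
      rw [Finset.card_biUnion (fun x _ y _ hxy => hφ2 x y hxy)]
      have : ∀ v ∈ (Finset.univ : Finset (Fin n)), (φ v).card = b := fun v _ => (hφ1 v).2
      rw [Finset.sum_congr rfl this]
      simp [Finset.card_univ, mul_comm]
    have hle : (Finset.univ.biUnion φ).card ≤ N := by
      calc (Finset.univ.biUnion φ).card
          ≤ ((Finset.range N).image (fun k : ℕ => (k : ℤ))).card := by
            apply Finset.card_le_card
            intro x hx
            obtain ⟨v, _, hv⟩ := Finset.mem_biUnion.mp hx
            exact hsub v hv
        _ = N := by rw [Finset.card_image_of_injective _ hinj, Finset.card_range]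
    omega
end

section
/- Let n ≥ 3, let c = ⌊2(a−b)/(n−1)⌋ with b ≤ a ≤ 2b, and let L be a c-separating a-list assignment on K_n. Then for every subset S of the vertices with |S| = i, the union of the lists L(v) for v ∈ S has cardinality at least i·b. -/
theorem amplitude_condition_low_range (n a b : ℕ) (hn : 3 ≤ n) (hb : 0 < b)
    (hba : b ≤ a) (hab : a ≤ 2 * b)
    (L : Fin n → Finset ℤ) (hL : ∀ v, (L v).card = a)
    (hsep : ∀ u v : Fin n, u ≠ v →
      (L u ∩ L v).card ≤ 2 * (a - b) / (n - 1))
    (S : Finset (Fin n)) :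
    S.card * b ≤ (S.biUnion L).card := by
  set c : ℕ := 2 * (a - b) / (n - 1) with hc
  -- main inductive claim
  have main : ∀ T : Finset (Fin n),
      (T.card * a : ℤ) - (T.card.choose 2 : ℤ) * c ≤ ((T.biUnion L).card : ℤ) := by
    intro T
    induction T using Finset.induction_on with
    | empty => simp
    | @insert v T' hv ih =>
      rw [Finset.biUnion_insert]
      have hcap : ((L v ∩ T'.biUnion L).card : ℤ) ≤ (T'.card : ℤ) * c := by
        have hsub : L v ∩ T'.biUnion L ⊆ T'.biUnion (fun u => L v ∩ L u) := by
          intro x hx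
          simp only [Finset.mem_inter, Finset.mem_biUnion] at hx ⊢
          obtain ⟨h1, u, hu, h2⟩ := hx
          exact ⟨u, hu, h1, h2⟩
        calc ((L v ∩ T'.biUnion L).card : ℤ)
            ≤ ((T'.biUnion (fun u => L v ∩ L u)).card : ℤ) := by
              exact_mod_cast Finset.card_le_card hsub
          _ ≤ (∑ u ∈ T', (L v ∩ L u).card : ℕ) := by
              exact_mod_cast Finset.card_biUnion_le
          _ ≤ (∑ u ∈ T', c : ℕ) := by
              exact_mod_cast Finset.sum_le_sum (fun u hu => by
                have : v ≠ u := fun h => hv (h ▸ hu)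
                exact hsep v u this)
          _ = (T'.card : ℤ) * c := by simp [Finset.sum_const, mul_comm]
      have hun : ((L v ∪ T'.biUnion L).card : ℤ)
          = (L v).card + ((T'.biUnion L).card : ℤ) - ((L v ∩ T'.biUnion L).card : ℤ) := by
        have := Finset.card_union_add_card_inter (L v) (T'.biUnion L)
        omega
      rw [Finset.card_insert_of_notMem hv]
      have hch : ((T'.card + 1).choose 2 : ℤ) = (T'.card.choose 2 : ℤ) + T'.card := by
        have : (T'.card + 1).choose 2 = T'.card.choose 1 + T'.card.choose 2 :=
          Nat.choose_succ_succ T'.card 1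
        rw [this, Nat.choose_one_right]; push_cast; ring
      rw [hun, hch, hL v]
      push_cast
      linarith
  -- bound choose 2 * c
  have hiN : S.card ≤ n := by
    have := Finset.card_le_univ S
    simpa using this
  have hkey : S.card.choose 2 * c ≤ S.card * (a - b) := by
    have h2 : 2 * S.card.choose 2 = S.card * (S.card - 1) := by
      rcases S.card with _ | j
      · simp
      · rw [Nat.choose_two_right, Nat.succ_sub_one]
        have hdvd : 2 ∣ (j + 1) * j := by
          have : Even (j * (j + 1)) := Nat.even_mul_succ_self j
          rw [mul_comm]
          exact this.two_dvd
        exact Nat.mul_div_cancel' hdvd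
    have hc1 : c * (n - 1) ≤ 2 * (a - b) := Nat.div_mul_le_self _ _
    have h3 : S.card * ((S.card - 1) * c) ≤ S.card * ((n - 1) * c) := by
      apply Nat.mul_le_mul_left
      apply Nat.mul_le_mul_right
      omega
    have h4 : S.card * ((n - 1) * c) ≤ S.card * (2 * (a - b)) := by
      apply Nat.mul_le_mul_left
      rw [mul_comm]; exact hc1
    have : 2 * (S.card.choose 2 * c) ≤ 2 * (S.card * (a - b)) := by
      calc 2 * (S.card.choose 2 * c) = (2 * S.card.choose 2) * c := by ring
        _ = S.card * (S.card - 1) * c := by rw [h2]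
        _ = S.card * ((S.card - 1) * c) := by ring
        _ ≤ S.card * (2 * (a - b)) := le_trans h3 h4
        _ = 2 * (S.card * (a - b)) := by ring
    omega
  have hmain := main S
  have hab' : ((a - b : ℕ) : ℤ) = (a : ℤ) - b := by
    omega
  have hkey' : (S.card.choose 2 : ℤ) * c ≤ (S.card : ℤ) * ((a : ℤ) - b) := by
    have := hkey
    rw [← hab']
    exact_mod_cast this
  have : (S.card * b : ℤ) ≤ ((S.biUnion L).card : ℤ) := by
    have : (S.card : ℤ) * b = S.card * a - S.card * ((a:ℤ) - b) := by ring
    push_cast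
    linarith
  exact_mod_cast this
end

section
/- Let a, b, n be positive integers with a ≥ 2b, let c = ⌊a²/(2b(n−1))⌋, and suppose c divides a. Then K_n is (a,b,c)-choosable. -/
open Finset

/-- Key numeric inequality. -/
lemma key_sum_aux (a b c k n' : ℕ) (hb : 0 < b) (hc : 0 < c)
    (hk : c * k = a) (hab : 2 * b ≤ a) (hcn : 2 * b * n' ≤ k * a) :
    ∀ s, s ≤ n' + 1 → b * s ≤ ∑ i ∈ Finset.range s, (a - i * c) := by
  intro s hs
  rcases Nat.eq_zero_or_pos s with rfl | hs1
  · simp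
  have ha : 0 < a := lt_of_lt_of_le (by omega) hab
  have hk1 : 1 ≤ k := by
    rcases Nat.eq_zero_or_pos k with rfl | h
    · omega
    · exact h
  set m := min s k with hm
  have hm1 : 1 ≤ m := le_min hs1 hk1
  have hsum : ∑ i ∈ Finset.range s, (a - i * c) = ∑ i ∈ Finset.range m, (a - i * c) := by
    refine (Finset.sum_subset (Finset.range_subset_range.2 (min_le_left _ _)) ?_).symm
    intro i hi hni
    simp only [Finset.mem_range, not_lt] at hi hni
    have hki : k ≤ i := by omega
    have : a ≤ i * c := by
      calc a = c * k := hk.symm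
      _ ≤ c * i := Nat.mul_le_mul_left _ hki
      _ = i * c := Nat.mul_comm _ _
    omega
  rw [hsum]
  have hle : ∀ i ∈ Finset.range m, i * c ≤ a := by
    intro i hi
    simp only [Finset.mem_range] at hi
    have h1 : i + 1 ≤ k := by omega
    have h2 : (i + 1) * c ≤ k * c := Nat.mul_le_mul_right _ h1
    have h3 : k * c = a := by rw [Nat.mul_comm]; exact hk
    have h4 : (i + 1) * c = i * c + c := by ring
    omega
  -- cast to ℤ
  rw [← @Nat.cast_le ℤ]
  push_cast
  have hcast : ∀ i ∈ Finset.range m, ((a - i * c : ℕ) : ℤ) = (a : ℤ) - i * c := by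
    intro i hi
    have := hle i hi
    rw [Nat.cast_sub this]
    push_cast
    ring
  rw [Finset.sum_congr rfl hcast]
  have hgauss : (2 : ℤ) * ∑ i ∈ Finset.range m, (i : ℤ) = (m : ℤ) * ((m : ℤ) - 1) := by
    have h := Finset.sum_range_id_mul_two m
    have : ((∑ i ∈ Finset.range m, i) * 2 : ℕ) = ((m * (m - 1) : ℕ)) := h
    have h2 := congrArg (fun x : ℕ => (x : ℤ)) this
    push_cast [Nat.cast_sub hm1] at h2
    linarith
  have hsum2 : ∑ i ∈ Finset.range m, ((a : ℤ) - i * c)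
      = (m : ℤ) * a - c * ∑ i ∈ Finset.range m, (i : ℤ) := by
    rw [Finset.sum_sub_distrib, Finset.sum_const, Finset.card_range, nsmul_eq_mul,
      Finset.mul_sum]
    congr 1
    exact Finset.sum_congr rfl fun i _ => mul_comm _ _
  rw [hsum2]
  -- reduce to 2 * (b*s) ≤ 2*(m*a) - c*(m*(m-1))
  have goal2 : 2 * ((b : ℤ) * s) ≤ 2 * ((m : ℤ) * a) - (c : ℤ) * ((m : ℤ) * ((m : ℤ) - 1)) := by
    have hka : (c : ℤ) * k = a := by exact_mod_cast hk
    rcases le_or_gt s k with hsk | hks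
    · have hmeq : (m : ℤ) = s := by rw [hm]; exact_mod_cast congrArg (Nat.cast : ℕ → ℤ) (min_eq_left hsk)
      have hcs : (c : ℤ) * s ≤ a := by
        calc (c : ℤ) * s ≤ c * k := by
              have : (s : ℤ) ≤ k := by exact_mod_cast hsk
              nlinarith [Int.ofNat_nonneg c]
        _ = a := hka
      have hs1' : (1 : ℤ) ≤ s := by exact_mod_cast hs1
      have hab' : 2 * (b : ℤ) ≤ a := by exact_mod_cast hab
      have hc' : (1 : ℤ) ≤ c := by exact_mod_cast hc
      rw [hmeq]
      nlinarith [mul_nonneg (sub_nonneg.2 hcs) (sub_nonneg.2 hs1'),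
        mul_nonneg (sub_nonneg.2 hab') (sub_nonneg.2 hs1')]
    · have hmeq : (m : ℤ) = k := by
        rw [hm]; exact_mod_cast congrArg (Nat.cast : ℕ → ℤ) (min_eq_right hks.le)
      have hcn' : 2 * (b : ℤ) * n' ≤ k * a := by exact_mod_cast hcn
      have hsn : (s : ℤ) ≤ (n' : ℤ) + 1 := by exact_mod_cast hs
      have hab' : 2 * (b : ℤ) ≤ a := by exact_mod_cast hab
      have hb' : (1 : ℤ) ≤ b := by exact_mod_cast hb
      rw [hmeq]
      have hrhs : 2 * ((k : ℤ) * a) - (c : ℤ) * ((k : ℤ) * ((k : ℤ) - 1)) = (k : ℤ) * a + a := by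
        have : (c : ℤ) * ((k : ℤ) * ((k : ℤ) - 1)) = a * ((k:ℤ) - 1) := by
          rw [← hka]; ring
        rw [this]; ring
      rw [hrhs]
      nlinarith [mul_le_mul_of_nonneg_left hsn (by positivity : (0:ℤ) ≤ 2 * (b:ℤ))]
  have hmul : (c : ℤ) * (2 * ∑ i ∈ Finset.range m, (i : ℤ)) = (c:ℤ) * ((m:ℤ) * ((m:ℤ) - 1)) := by
    rw [hgauss]
  linarith

/-- Greedy union lower bound. -/
lemma union_bound {n : ℕ} (L : Fin n → Finset ℤ) (a c : ℕ)
    (hL : ∀ v, (L v).card = a)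
    (hsep : ∀ u v : Fin n, u ≠ v → (L u ∩ L v).card ≤ c) :
    ∀ S : Finset (Fin n), ∑ i ∈ Finset.range S.card, (a - i * c) ≤ (S.biUnion L).card := by
  intro S
  induction S using Finset.cons_induction with
  | empty => simp
  | cons v T hv ih =>
    rw [Finset.cons_eq_insert, Finset.biUnion_insert, Finset.card_insert_of_notMem hv]
    set B := T.biUnion L with hB
    have hcard : (L v ∪ B).card = (L v \ B).card + B.card := (Finset.card_sdiff_add_card _ _).symm
    have hinter : (L v ∩ B).card ≤ T.card * c := by
      have hsub : L v ∩ B ⊆ T.biUnion (fun u => L v ∩ L u) := by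
        intro x hx
        simp only [Finset.mem_inter, hB, Finset.mem_biUnion] at hx
        obtain ⟨hx1, u, hu, hx2⟩ := hx
        exact Finset.mem_biUnion.2 ⟨u, hu, Finset.mem_inter.2 ⟨hx1, hx2⟩⟩
      calc (L v ∩ B).card ≤ (T.biUnion (fun u => L v ∩ L u)).card := Finset.card_le_card hsub
      _ ≤ ∑ u ∈ T, (L v ∩ L u).card := Finset.card_biUnion_le
      _ ≤ ∑ _u ∈ T, c := by
          refine Finset.sum_le_sum fun u hu => hsep v u ?_
          rintro rfl; exact hv hu
      _ = T.card * c := by simp [Finset.sum_const, Nat.smul_one_eq_cast]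
    have hsdiff : a - T.card * c ≤ (L v \ B).card := by
      have h1 := Finset.card_sdiff_add_card_inter (L v) B
      have h2 := hL v
      omega
    rw [Finset.sum_range_succ, hcard]
    have := Nat.add_le_add hsdiff ih
    omega

theorem choosable_Kn_of_sq_div (n a b : ℕ) (hn : 0 < n) (ha : 0 < a) (hb : 0 < b)
    (hab : 2 * b ≤ a) (hdvd : a ^ 2 / (2 * b * (n - 1)) ∣ a) :
    CompleteChoosable n a b (a ^ 2 / (2 * b * (n - 1))) := by
  intro L hL hsep
  set c := a ^ 2 / (2 * b * (n - 1)) with hc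
  have hc0 : 0 < c := by
    rcases Nat.eq_zero_or_pos c with h | h
    · rw [h] at hdvd
      exact absurd (Nat.eq_zero_of_zero_dvd hdvd) (by omega)
    · exact h
  set k := a / c with hkdef
  have hck : c * k = a := Nat.mul_div_cancel' hdvd
  have hcmul : c * (2 * b * (n - 1)) ≤ a ^ 2 := Nat.div_mul_le_self (a ^ 2) (2 * b * (n - 1))
  have hka : 2 * b * (n - 1) ≤ k * a := by
    have h1 : c * (2 * b * (n - 1)) ≤ c * (k * a) := by
      calc c * (2 * b * (n - 1)) ≤ a ^ 2 := hcmul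
      _ = (c * k) * a := by rw [hck]; ring
      _ = c * (k * a) := by ring
    exact Nat.le_of_mul_le_mul_left h1 hc0
  -- Hall condition for the blown-up bipartite system
  have hall : ∀ s : Finset (Fin n × Fin b), s.card ≤ (s.biUnion (fun x => L x.1)).card := by
    intro s
    have himg : s.biUnion (fun x => L x.1) = (s.image Prod.fst).biUnion L := by
      ext z
      simp only [Finset.mem_biUnion, Finset.mem_image]
      constructor
      · rintro ⟨x, hx, hz⟩; exact ⟨x.1, ⟨x, hx, rfl⟩, hz⟩
      · rintro ⟨v, ⟨x, hx, rfl⟩, hz⟩; exact ⟨x, hx, hz⟩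
    rw [himg]
    set I := s.image Prod.fst with hI
    have hfiber : s.card ≤ b * I.card := by
      apply Finset.card_le_mul_card_image
      intro v _
      have hsub : {x ∈ s | x.1 = v} ⊆ ({v} : Finset (Fin n)) ×ˢ (Finset.univ : Finset (Fin b)) := by
        intro x hx
        simp only [Finset.mem_filter] at hx
        exact Finset.mem_product.2 ⟨by simp [hx.2], Finset.mem_univ _⟩
      calc ({x ∈ s | x.1 = v}).card ≤ (({v} : Finset (Fin n)) ×ˢ (Finset.univ : Finset (Fin b))).card :=
            Finset.card_le_card hsub
      _ = b := by simp
    have hIn : I.card ≤ n := by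
      calc I.card ≤ (Finset.univ : Finset (Fin n)).card := Finset.card_le_univ _
      _ = n := Finset.card_fin n
    have hkey : b * I.card ≤ ∑ i ∈ Finset.range I.card, (a - i * c) := by
      apply key_sum_aux a b c k (n - 1) hb hc0 hck hab hka
      omega
    have hub := union_bound L a c hL hsep I
    omega
  obtain ⟨f, hfinj, hfmem⟩ :=
    (Finset.all_card_le_biUnion_card_iff_exists_injective (fun x : Fin n × Fin b => L x.1)).1 hall
  refine ⟨fun v => (Finset.univ : Finset (Fin b)).image (fun j => f (v, j)), ?_, ?_⟩
  · intro v
    constructor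
    · intro z hz
      simp only [Finset.mem_image] at hz
      obtain ⟨j, _, rfl⟩ := hz
      exact hfmem (v, j)
    · rw [Finset.card_image_of_injective _ (fun j j' h => by
        have := hfinj h
        exact (Prod.mk.injEq _ _ _ _ ▸ this).2)]
      simp
  · intro u v huv
    rw [Finset.disjoint_left]
    intro z hzu hzv
    simp only [Finset.mem_image] at hzu hzv
    obtain ⟨j, _, hj⟩ := hzu
    obtain ⟨j', _, hj'⟩ := hzv
    have := hfinj (hj.trans hj'.symm)
    exact huv (congrArg Prod.fst this)
end

section
/- For integers n ≥ 4 and k ≥ 2 with n ≥ (2k−1+√(8k+1))/2, there exist k+1 subsets S'_1,...,S'_{k+1} of [n] each of cardinality k, and k subsets S_1,...,S_k of [n] each of cardinality k+1, such that for every element i ∈ [n], the number of sets S'_j containing i equals the number of sets S_j containing i. -/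
open Finset Pointwise

/-!
Work in `ℤ/nℤ` and take cyclic intervals: `S'ⱼ = j + {0, …, k - 1}` for `j ≤ k` and
`Sⱼ = j + {0, …, k}` for `j < k`. A point `x` lies in as many `S'ⱼ` as there are ways to write
`x = a + b` with `a ≤ k`, `b < k`, and in as many `Sⱼ` as there are ways to write `x = b + a`
with the same constraints, so the two counts agree. Distinct starting points give distinct
intervals as long as the length is positive and less than `n`, which is where `n ≥ k + 2`
(implied by the hypothesis on `n`) is needed.
-/

theorem card_filter_mem_vadd_finset_comm {G : Type*} [AddCommGroup G] [DecidableEq G]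
    (A B : Finset G) (x : G) :
    #{a ∈ A | x ∈ a +ᵥ B} = #{b ∈ B | x ∈ b +ᵥ A} := by
  simp_rw [← Finset.neg_vadd_mem_iff, vadd_eq_add, neg_add_eq_sub]
  refine card_nbij' (x - ·) (x - ·) ?_ ?_ ?_ ?_ <;> intro a <;> simp +contextual

def initialSegment (n L : ℕ) : Finset (Fin n) := {x | x.val < L}

section initialSegment
variable {n L : ℕ}

@[simp]
theorem mem_initialSegment {x : Fin n} : x ∈ initialSegment n L ↔ x.val < L := by
  simp [initialSegment]

theorem initialSegment_eq_map_castLE (h : L ≤ n) :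
    initialSegment n L = univ.map (Fin.castLEEmb h) := by
  ext x
  simp only [mem_initialSegment, mem_map, mem_univ, true_and, Fin.castLEEmb_apply]
  exact ⟨fun hx => ⟨⟨x, hx⟩, rfl⟩, by rintro ⟨y, rfl⟩; exact y.isLt⟩

theorem card_initialSegment (h : L ≤ n) : #(initialSegment n L) = L := by
  simp [initialSegment_eq_map_castLE h]

variable [NeZero n]

theorem eq_zero_of_mem_initialSegment_of_sub_one_notMem {x : Fin n}
    (hx : x ∈ initialSegment n L) (hx' : x - 1 ∉ initialSegment n L) : x = 0 := by
  obtain ⟨n, rfl⟩ : ∃ m, n = m + 1 := Nat.exists_eq_succ_of_ne_zero (NeZero.ne n)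
  simp only [mem_initialSegment, Fin.coe_sub_one] at hx hx'
  split_ifs at hx' with h0
  · exact h0
  · omega

theorem neg_one_notMem_initialSegment (hL : L < n) : (-1 : Fin n) ∉ initialSegment n L := by
  obtain ⟨n, rfl⟩ : ∃ m, n = m + 1 := Nat.exists_eq_succ_of_ne_zero (NeZero.ne n)
  simp only [mem_initialSegment, Fin.coe_neg_one]
  omega

theorem vadd_initialSegment_injective (h0 : 0 < L) (hL : L < n) :
    Function.Injective (· +ᵥ initialSegment n L : Fin n → Finset (Fin n)) := by
  -- `a` is the only point of `a +ᵥ initialSegment n L` whose predecessor lies outside it.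
  intro a b (hab : a +ᵥ initialSegment n L = b +ᵥ initialSegment n L)
  have hmem : -b + a ∈ initialSegment n L := by
    rw [← vadd_eq_add, Finset.neg_vadd_mem_iff, ← hab, ← Finset.neg_vadd_mem_iff, vadd_eq_add,
      neg_add_cancel]
    simpa using h0
  have hpred : -b + a - 1 ∉ initialSegment n L := by
    rw [add_sub_assoc, ← vadd_eq_add, Finset.neg_vadd_mem_iff, ← hab, ← Finset.neg_vadd_mem_iff,
      vadd_eq_add, ← add_sub_assoc, neg_add_cancel, zero_sub]
    exact neg_one_notMem_initialSegment hL
  exact (neg_add_eq_zero.mp (eq_zero_of_mem_initialSegment_of_sub_one_notMem hmem hpred)).symm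

end initialSegment

def cyclicIntervals (n m L : ℕ) [NeZero n] (h : m ≤ n) (j : Fin m) : Finset (Fin n) :=
  Fin.castLE h j +ᵥ initialSegment n L

section cyclicIntervals
variable {n m L : ℕ} [NeZero n] (h : m ≤ n)

theorem cyclicIntervals_injective (h0 : 0 < L) (hL : L < n) :
    Function.Injective (cyclicIntervals n m L h) :=
  (vadd_initialSegment_injective h0 hL).comp (Fin.castLE_injective h)

theorem card_cyclicIntervals (hL : L ≤ n) (j : Fin m) : #(cyclicIntervals n m L h j) = L := by
  rw [cyclicIntervals, card_vadd_finset, card_initialSegment hL]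

theorem card_filter_mem_cyclicIntervals (x : Fin n) :
    #{j | x ∈ cyclicIntervals n m L h j} =
      #{a ∈ initialSegment n m | x ∈ a +ᵥ initialSegment n L} := by
  rw [initialSegment_eq_map_castLE h, filter_map, card_map]
  rfl

end cyclicIntervals

theorem add_two_le_of_le_half_add_sqrt {n k : ℕ} (hk : 2 ≤ k)
    (hnk : ((2 * k : ℝ) - 1 + Real.sqrt (8 * k + 1)) / 2 ≤ n) : k + 2 ≤ n := by
  have hsqrt : (3 : ℝ) < Real.sqrt (8 * k + 1) := by
    rw [Real.lt_sqrt (by norm_num)]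
    have : (2 : ℝ) ≤ k := by exact_mod_cast hk
    linarith
  have : (k + 1 : ℝ) < n := by linarith
  exact_mod_cast this

theorem exists_families_same_cardinality_support_general (n k : ℕ) (hk : 2 ≤ k)
    (hnk : ((2 * k : ℝ) - 1 + Real.sqrt (8 * k + 1)) / 2 ≤ n) :
    ∃ (S' : Fin (k + 1) → Finset (Fin n)) (S : Fin k → Finset (Fin n)),
      Function.Injective S' ∧ Function.Injective S ∧
      (∀ j, (S' j).card = k) ∧ (∀ j, (S j).card = k + 1) ∧
      ∀ i : Fin n,
        (Finset.univ.filter fun j => i ∈ S' j).card =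
          (Finset.univ.filter fun j => i ∈ S j).card := by
  have hkn : k + 2 ≤ n := add_two_le_of_le_half_add_sqrt hk hnk
  have : NeZero n := ⟨by omega⟩
  refine ⟨cyclicIntervals n (k + 1) k (by omega), cyclicIntervals n k (k + 1) (by omega),
    cyclicIntervals_injective _ (by omega) (by omega),
    cyclicIntervals_injective _ (by omega) (by omega),
    card_cyclicIntervals _ (by omega), card_cyclicIntervals _ (by omega), fun i => ?_⟩
  rw [card_filter_mem_cyclicIntervals, card_filter_mem_cyclicIntervals,
    card_filter_mem_vadd_finset_comm]

theorem exists_families_same_cardinality_support (n k : ℕ) (hn : 4 ≤ n) (hk : 2 ≤ k)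
    (hnk : ((2 * k : ℝ) - 1 + Real.sqrt (8 * k + 1)) / 2 ≤ n) :
    ∃ (S' : Fin (k + 1) → Finset (Fin n)) (S : Fin k → Finset (Fin n)),
      Function.Injective S' ∧ Function.Injective S ∧
      (∀ j, (S' j).card = k) ∧ (∀ j, (S j).card = k + 1) ∧
      ∀ i : Fin n,
        (Finset.univ.filter fun j => i ∈ S' j).card =
          (Finset.univ.filter fun j => i ∈ S j).card :=
  exists_families_same_cardinality_support_general n k hk hnk
end

section
/- Let n ≥ 3. For any weight vector w = (w_1,...,w_n) of nonnegative integers, the multiset P(n)^w (containing w_i copies of each i-element subset of [n], for each i) admits a balanced partition P_1,...,P_n: that is, every set placed in class P_j contains j, and the class sizes differ pairwise by at most 1. -/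
/-!
Give class `j` exactly `l j` slots, with loads `l j ∈ {⌊N/n⌋, ⌊N/n⌋ + 1}` adding up to the number
`N` of sets in the multiset. Placing every set into a slot of one of its elements is a matching
problem, and by Hall's theorem it suffices that any `s` of the sets whose union `U` is a proper
subset of `[n]` satisfy `s ≤ |U| ⌊N/n⌋`. At most `∑ᵢ wᵢ C(|U|, i)` of the sets lie inside `U`,
and as `N = ∑ᵢ wᵢ C(n, i)`, this is at most `|U| ⌊N/n⌋` by `C(u, i) ≤ u ⌊C(n, i)/n⌋` for `0 < i`,
`u < n`.
-/

open Finset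

namespace Nat

theorem self_le_choose : ∀ {n k : ℕ}, 0 < k → k < n → n ≤ n.choose k
  | n + 1, 1, _, _ => by simp
  | n + 1, k + 2, _, h => by
    have ih := self_le_choose (n := n) (k := k + 1) (by omega) (by omega)
    have := choose_pos (show k + 1 + 1 ≤ n by omega)
    rw [choose_succ_succ']
    omega

theorem mul_choose_le_mul_choose {i u m : ℕ} (hi : 0 < i) (hu : u ≤ m) :
    m * u.choose i ≤ u * m.choose i := by
  obtain ⟨j, rfl⟩ := exists_add_one_eq.2 hi
  rcases u with _ | u
  · simp
  obtain ⟨m, rfl⟩ : ∃ m', m = m' + 1 := ⟨m - 1, by omega⟩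
  refine le_of_mul_le_mul_right ?_ (succ_pos j)
  calc (m + 1) * (u + 1).choose (j + 1) * (j + 1)
      = (m + 1) * ((u + 1) * u.choose j) := by rw [mul_assoc, add_one_mul_choose_eq]
    _ ≤ (u + 1) * ((m + 1) * m.choose j) := by
      rw [mul_left_comm]; gcongr; omega
    _ = (u + 1) * (m + 1).choose (j + 1) * (j + 1) := by rw [add_one_mul_choose_eq, mul_assoc]

/- With `(n + 1).choose (j + 1) = (n + 1) * q + r`, the identity
`(n + 1) * n.choose j = (j + 1) * (n + 1).choose (j + 1)` gives `(n + 1) * m = (j + 1) * r` for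
`m = n.choose j - (j + 1) * q`, so `m ≤ j`; with `n ≤ n.choose j` this bounds `q + r`. -/
theorem choose_div_add_choose_mod_le {n j : ℕ} (hj : 0 < j) (hjn : j < n) :
    (n + 1).choose (j + 1) / (n + 1) + (n + 1).choose (j + 1) % (n + 1) ≤ n.choose j := by
  have hmul := add_one_mul_choose_eq n j
  have hqr := (div_add_mod ((n + 1).choose (j + 1)) (n + 1)).symm
  have hr := mod_lt ((n + 1).choose (j + 1)) (succ_pos n)
  have hB := self_le_choose hj hjn
  set q := (n + 1).choose (j + 1) / (n + 1)
  set r := (n + 1).choose (j + 1) % (n + 1)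
  rw [hqr] at hmul
  zify at *
  set m : ℤ := n.choose j - (j + 1) * q with hm
  have hmr : (n + 1) * m = (j + 1) * r := by rw [hm]; linear_combination hmul
  have hm0 : 0 ≤ m := by nlinarith
  have hmj : m ≤ j := by nlinarith
  have hq : (n : ℤ) - j ≤ (j + 1) * q := by linarith
  have key : ((n : ℤ) - j) * m ≤ j * ((j + 1) * q) :=
    calc ((n : ℤ) - j) * m ≤ ((j + 1) * q) * m := by gcongr
      _ ≤ ((j + 1) * q) * j := by gcongr
      _ = _ := by ring
  nlinarith

theorem choose_le_mul_choose_succ_div {n i : ℕ} (hi : 0 < i) :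
    n.choose i ≤ n * ((n + 1).choose i / (n + 1)) := by
  obtain ⟨j, rfl⟩ := exists_add_one_eq.2 hi
  rcases j.eq_zero_or_pos with rfl | hj
  · simp [Nat.div_self (succ_pos n)]
  rcases lt_or_ge n (j + 1) with hn | hn
  · simp [choose_eq_zero_of_lt hn]
  have hqr := div_add_mod ((n + 1).choose (j + 1)) (n + 1)
  have := choose_div_add_choose_mod_le hj (by omega : j < n)
  rw [choose_succ_succ'] at hqr this ⊢
  nlinarith

theorem choose_le_mul_choose_div {u n i : ℕ} (hi : 0 < i) (hu : u < n) :
    u.choose i ≤ u * (n.choose i / n) := by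
  rcases u.eq_zero_or_pos with rfl | hu₀
  · simp [choose_eq_zero_of_lt hi]
  obtain ⟨m, rfl⟩ := exists_add_one_eq.2 (zero_lt_of_lt hu)
  refine le_of_mul_le_mul_left ?_ (by omega : 0 < m)
  calc m * u.choose i ≤ u * m.choose i := mul_choose_le_mul_choose hi (by omega)
    _ ≤ u * (m * ((m + 1).choose i / (m + 1))) := by gcongr; exact choose_le_mul_choose_succ_div hi
    _ = m * (u * ((m + 1).choose i / (m + 1))) := by ring

theorem sum_range_choose_mul_le {f : ℕ → ℕ} (hf : f 0 = 0) {u n : ℕ} (hu : u < n) :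
    ∑ k ∈ range (u + 1), u.choose k * f k ≤ u * ((∑ k ∈ range (n + 1), n.choose k * f k) / n) := by
  have hterm : ∀ k, u.choose k * f k ≤ u * (n.choose k / n * f k) := fun k => by
    rcases k.eq_zero_or_pos with rfl | hk
    · simp [hf]
    rw [← mul_assoc]
    exact Nat.mul_le_mul_right _ (choose_le_mul_choose_div hk hu)
  calc ∑ k ∈ range (u + 1), u.choose k * f k
      ≤ ∑ k ∈ range (u + 1), u * (n.choose k / n * f k) := sum_le_sum fun k _ => hterm k
    _ = u * ∑ k ∈ range (u + 1), n.choose k / n * f k := (mul_sum ..).symm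
    _ ≤ u * ((∑ k ∈ range (n + 1), n.choose k * f k) / n) := by
      gcongr
      rw [le_div_iff_mul_le (by omega), sum_mul]
      calc ∑ k ∈ range (u + 1), n.choose k / n * f k * n
          ≤ ∑ k ∈ range (u + 1), n.choose k * f k := sum_le_sum fun k _ => by
            rw [mul_right_comm]; gcongr; exact div_mul_le_self _ _
        _ ≤ ∑ k ∈ range (n + 1), n.choose k * f k :=
            sum_le_sum_of_subset (range_subset_range.2 (by omega))

end Nat

theorem Finset.sum_powerset_le_card_mul_div {α β : Type*} {f : ℕ → ℕ} (hf : f 0 = 0)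
    {U : Finset α} {V : Finset β} (h : #U < #V) :
    ∑ S ∈ U.powerset, f #S ≤ #U * ((∑ S ∈ V.powerset, f #S) / #V) := by
  simpa only [sum_powerset_apply_card, smul_eq_mul] using Nat.sum_range_choose_mul_le hf h

section Assignment

variable {ι κ : Type*} [Fintype κ]

theorem exists_balanced_loads [Nonempty κ] (N : ℕ) :
    ∃ l : κ → ℕ, ∑ j, l j = N ∧ ∀ j, N / Fintype.card κ ≤ l j ∧ l j ≤ N / Fintype.card κ + 1 := by
  classical
  obtain ⟨R, -, hR⟩ := exists_subset_card_eq (s := (univ : Finset κ)) (n := N % Fintype.card κ)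
    ((Nat.mod_lt _ Fintype.card_pos).le)
  refine ⟨fun j => N / Fintype.card κ + if j ∈ R then 1 else 0, ?_,
    fun j => by dsimp only; split_ifs <;> simp⟩
  rw [sum_add_distrib, sum_const, sum_ite_mem, univ_inter, sum_const, hR, card_univ, smul_eq_mul,
    smul_eq_mul, mul_one, Nat.div_add_mod]

theorem card_sigma_fin_filter_fst (l : κ → ℕ) (P : κ → Prop) [DecidablePred P] :
    #{p : Σ j, Fin (l j) | P p.1} = ∑ j with P j, l j := by
  rw [card_filter, Fintype.sum_sigma, sum_filter]
  simp [apply_ite]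

variable [DecidableEq κ] [Fintype ι]

theorem exists_forall_mem_card_fiber_le (A : ι → Finset κ) (l : κ → ℕ)
    (hall : ∀ s : Finset ι, #s ≤ ∑ j ∈ s.biUnion A, l j) :
    ∃ f : ι → κ, (∀ x, f x ∈ A x) ∧ ∀ j, #{x | f x = j} ≤ l j := by
  let t : ι → Finset (Σ j, Fin (l j)) := fun x => {p | p.1 ∈ A x}
  have hunion (s : Finset ι) :
      s.biUnion t = ({p | p.1 ∈ s.biUnion A} : Finset (Σ j, Fin (l j))) := by
    ext; simp [t]
  obtain ⟨g, hg, hgt⟩ := (all_card_le_biUnion_card_iff_exists_injective t).1 fun s => by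
    rw [hunion, card_sigma_fin_filter_fst l (· ∈ s.biUnion A), filter_univ_mem]; exact hall s
  refine ⟨fun x => (g x).1, fun x => by simpa [t] using hgt x, fun j => ?_⟩
  calc #{x | (g x).1 = j} ≤ #{p : Σ j, Fin (l j) | p.1 = j} :=
        card_le_card_of_injOn g (fun x hx => by simpa using hx) hg.injOn
    _ = l j := by
      rw [card_sigma_fin_filter_fst l (· = j), filter_eq' univ j, if_pos (mem_univ j),
        sum_singleton]

theorem exists_balanced_assignment [Nonempty κ] (A : ι → Finset κ)
    (hall : ∀ s : Finset ι, s.biUnion A ≠ univ →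
      #s ≤ #(s.biUnion A) * (Fintype.card ι / Fintype.card κ)) :
    ∃ f : ι → κ, (∀ x, f x ∈ A x) ∧ ∀ j j', #{x | f x = j} ≤ #{x | f x = j'} + 1 := by
  obtain ⟨l, hl, hlN⟩ := exists_balanced_loads (κ := κ) (Fintype.card ι)
  obtain ⟨f, hfA, hfl⟩ := exists_forall_mem_card_fiber_le A l fun s => by
    by_cases hU : s.biUnion A = univ
    · rw [hU, hl]; exact card_le_univ s
    calc #s ≤ #(s.biUnion A) * (Fintype.card ι / Fintype.card κ) := hall s hU
      _ = ∑ j ∈ s.biUnion A, Fintype.card ι / Fintype.card κ := by rw [sum_const, smul_eq_mul]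
      _ ≤ ∑ j ∈ s.biUnion A, l j := sum_le_sum fun j _ => (hlN j).1
  have hfiber : ∀ j, #{x | f x = j} = l j := by
    refine fun j => ((sum_eq_sum_iff_of_le fun j _ => hfl j).1 ?_) j (mem_univ j)
    rw [hl, ← card_univ, card_eq_sum_card_fiberwise fun x _ => mem_univ (f x)]
  refine ⟨f, hfA, fun j j' => ?_⟩
  rw [hfiber, hfiber]
  linarith [(hlN j).2, (hlN j').1]

end Assignment

theorem exists_balanced_partition_of_fintype (α : Type*) [Fintype α] (w : ℕ → ℕ) :
    ∃ P : α → Multiset (Finset α),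
      ∑ j, P j = ∑ S with S.Nonempty, Multiset.replicate (w #S) S ∧
      (∀ j, ∀ X ∈ P j, j ∈ X) ∧ ∀ i j, Multiset.card (P i) ≤ Multiset.card (P j) + 1 := by
  let _ := Classical.decEq α
  rcases isEmpty_or_nonempty α with hα | hα
  · exact ⟨0, by simp [eq_empty_of_isEmpty], by simp, by simp⟩
  -- the items are the copies of the sets; `v 0 = 0` leaves out the empty set
  let v : ℕ → ℕ := fun k => if k = 0 then 0 else w k
  obtain ⟨f, hfA, hbal⟩ := exists_balanced_assignment (ι := Σ S : Finset α, Fin (v #S)) (·.1)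
    fun s hs => by
      set U := s.biUnion (·.1)
      calc #s ≤ #{x : Σ S : Finset α, Fin (v #S) | x.1 ⊆ U} :=
            card_le_card fun x hx => by simpa using subset_biUnion_of_mem (·.1) hx
        _ = ∑ S ∈ U.powerset, v #S := by
            rw [card_sigma_fin_filter_fst _ (· ⊆ U), filter_subset_univ]
        _ ≤ #U * ((∑ S ∈ (univ : Finset α).powerset, v #S) / #(univ : Finset α)) :=
            sum_powerset_le_card_mul_div (f := v) rfl ((card_lt_iff_ne_univ U).2 hs)
        _ = _ := by simp only [powerset_univ, card_univ, Fintype.card_sigma, Fintype.card_fin]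
  refine ⟨fun j => ∑ x with f x = j, {x.1}, ?_, ?_, ?_⟩
  · rw [sum_fiberwise, Fintype.sum_sigma, sum_filter]
    refine sum_congr rfl fun S _ => ?_
    by_cases hS : S.Nonempty
    · simp [v, hS, card_ne_zero.2 hS, Multiset.nsmul_singleton]
    · simp [v, not_nonempty_iff_eq_empty.1 hS]
  · intro j X hX
    simp only [Multiset.mem_sum, Multiset.mem_singleton, mem_filter_univ] at hX
    obtain ⟨x, rfl, rfl⟩ := hX
    exact hfA x
  · intro i j
    simpa [Multiset.card_sum] using hbal i j

theorem exists_balanced_partition_general (n : ℕ) (w : ℕ → ℕ) :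
    ∃ P : Fin n → Multiset (Finset (Fin n)),
      (∑ j : Fin n, P j) =
        ∑ S ∈ Finset.univ.filter (fun S : Finset (Fin n) => S.Nonempty),
          Multiset.replicate (w S.card) S ∧
      (∀ j : Fin n, ∀ X ∈ P j, j ∈ X) ∧
      (∀ i j : Fin n, Multiset.card (P i) ≤ Multiset.card (P j) + 1) :=
  exists_balanced_partition_of_fintype (Fin n) w

theorem exists_balanced_partition (n : ℕ) (hn : 3 ≤ n) (w : ℕ → ℕ) :
    ∃ P : Fin n → Multiset (Finset (Fin n)),
      (∑ j : Fin n, P j) =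
        ∑ S ∈ Finset.univ.filter (fun S : Finset (Fin n) => S.Nonempty),
          Multiset.replicate (w S.card) S ∧
      (∀ j : Fin n, ∀ X ∈ P j, j ∈ X) ∧
      (∀ i j : Fin n, Multiset.card (P i) ≤ Multiset.card (P j) + 1) :=
  exists_balanced_partition_general n w
end

section
/- For n = 3, the number of a-list assignments up to proper-intersection equivalence is |L(3,a)| = (a⁴ + 8a³ + 24a² + 32a + 16 − ε(a))/16, where ε(a) = 1 if a is odd and 0 if a is even. -/
/-!
An assignment is determined by its values `p, q, r, t` on `{0,1}, {0,2}, {1,2}, {0,1,2}`: the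
values on singletons are then forced, and they are nonnegative exactly when `p + q + t ≤ a`,
`p + r + t ≤ a` and `q + r + t ≤ a`. Count these quadruples `W(a)` by peeling off zero
coordinates. Splitting on `t = 0` gives `W(a+1) = W(a) + M(a+1)`, where `M(b)` counts triples
with pairwise sums at most `b`; splitting `M(b+2)` by its first zero coordinate gives
`M(b+2) = T(b+2) + T(b+1) + T(b) + M(b)`, with `T(c) = (c+1)(c+2)/2` pairs of sum at most `c`.
Hence `2(M(b) + M(b+1)) = (b+2)(b²+4b+5)`, and in steps of two `W(2m) = (m+1)⁴` and
`16 W(2m+1) + 1 = (2m+3)⁴`, while `a⁴ + 8a³ + 24a² + 32a + 16 = (a+2)⁴`.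
-/

open Finset

namespace ListAssignment

def triangle (c : ℕ) : Finset (ℕ × ℕ) :=
  (range (c + 1) ×ˢ range (c + 1)).filter fun v => v.1 + v.2 ≤ c

def pairwiseSumLE (b : ℕ) : Finset (ℕ × ℕ × ℕ) :=
  (range (b + 1) ×ˢ range (b + 1) ×ˢ range (b + 1)).filter fun v =>
    v.1 + v.2.1 ≤ b ∧ v.1 + v.2.2 ≤ b ∧ v.2.1 + v.2.2 ≤ b

def nonsingletonWeights (a : ℕ) : Finset (ℕ × ℕ × ℕ × ℕ) :=
  (range (a + 1) ×ˢ range (a + 1) ×ˢ range (a + 1) ×ˢ range (a + 1)).filter fun v =>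
    v.1 + v.2.1 + v.2.2.2 ≤ a ∧ v.1 + v.2.2.1 + v.2.2.2 ≤ a ∧
      v.2.1 + v.2.2.1 + v.2.2.2 ≤ a

@[simp]
lemma mem_triangle {c : ℕ} {v : ℕ × ℕ} : v ∈ triangle c ↔ v.1 + v.2 ≤ c := by
  simp only [triangle, mem_filter, mem_product, mem_range]; omega

@[simp]
lemma mem_pairwiseSumLE {b : ℕ} {v : ℕ × ℕ × ℕ} :
    v ∈ pairwiseSumLE b ↔ v.1 + v.2.1 ≤ b ∧ v.1 + v.2.2 ≤ b ∧ v.2.1 + v.2.2 ≤ b := by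
  simp only [pairwiseSumLE, mem_filter, mem_product, mem_range]; omega

@[simp]
lemma mem_nonsingletonWeights {a : ℕ} {v : ℕ × ℕ × ℕ × ℕ} :
    v ∈ nonsingletonWeights a ↔
      v.1 + v.2.1 + v.2.2.2 ≤ a ∧ v.1 + v.2.2.1 + v.2.2.2 ≤ a ∧
        v.2.1 + v.2.2.1 + v.2.2.2 ≤ a := by
  simp only [nonsingletonWeights, mem_filter, mem_product, mem_range]; omega

lemma card_triangle_succ (c : ℕ) : #(triangle (c + 1)) = #(triangle c) + (c + 2) := by
  rw [← card_filter_add_card_filter_not (p := fun v => v.2 ≠ 0)]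
  congr 1
  · refine card_nbij' (fun v => (v.1, v.2 - 1)) (fun v => (v.1, v.2 + 1)) ?_ ?_ ?_ ?_ <;>
      intro v hv <;>
      simp only [mem_coe, mem_filter, mem_triangle, Prod.ext_iff, true_and] at hv ⊢ <;>
      omega
  · rw [← card_range (c + 2)]
    refine card_nbij' Prod.fst (fun p => (p, 0)) ?_ ?_ ?_ ?_ <;>
      intro v hv <;>
      simp only [mem_coe, mem_filter, mem_range, mem_triangle, Prod.ext_iff, true_and] at hv ⊢ <;>
      omega

lemma card_triangle_mul_two (c : ℕ) : #(triangle c) * 2 = (c + 1) * (c + 2) := by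
  induction c with
  | zero => rfl
  | succ c ih => rw [card_triangle_succ, add_mul, ih]; ring

lemma card_pairwiseSumLE_add_two (b : ℕ) :
    #(pairwiseSumLE (b + 2)) =
      #(triangle (b + 2)) + #(triangle (b + 1)) + #(triangle b) + #(pairwiseSumLE b) := by
  set s := pairwiseSumLE (b + 2)
  have first_zero : #(s.filter fun v => v.1 = 0) = #(triangle (b + 2)) := by
    refine card_nbij' (fun v => v.2) (fun w => (0, w)) ?_ ?_ ?_ ?_ <;>
      intro v hv <;>
      simp only [s, mem_coe, mem_filter, mem_triangle, mem_pairwiseSumLE, Prod.ext_iff,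
        and_true] at hv ⊢ <;>
      omega
  have second_zero :
      #((s.filter fun v => ¬v.1 = 0).filter fun v => v.2.1 = 0) = #(triangle (b + 1)) := by
    refine card_nbij' (fun v => (v.1 - 1, v.2.2)) (fun w => (w.1 + 1, 0, w.2)) ?_ ?_ ?_ ?_ <;>
      intro v hv <;>
      simp only [s, mem_coe, mem_filter, mem_triangle, mem_pairwiseSumLE, Prod.ext_iff,
        and_true] at hv ⊢ <;>
      omega
  have third_zero : #(((s.filter fun v => ¬v.1 = 0).filter fun v => ¬v.2.1 = 0).filter
      fun v => v.2.2 = 0) = #(triangle b) := by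
    refine card_nbij' (fun v => (v.1 - 1, v.2.1 - 1)) (fun w => (w.1 + 1, w.2 + 1, 0))
      ?_ ?_ ?_ ?_ <;>
      intro v hv <;>
      simp only [s, mem_coe, mem_filter, mem_triangle, mem_pairwiseSumLE, Prod.ext_iff,
        and_true] at hv ⊢ <;>
      omega
  have none_zero : #(((s.filter fun v => ¬v.1 = 0).filter fun v => ¬v.2.1 = 0).filter
      fun v => ¬v.2.2 = 0) = #(pairwiseSumLE b) := by
    refine card_nbij' (fun v => (v.1 - 1, v.2.1 - 1, v.2.2 - 1))
      (fun w => (w.1 + 1, w.2.1 + 1, w.2.2 + 1)) ?_ ?_ ?_ ?_ <;>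
      intro v hv <;>
      simp only [s, mem_coe, mem_filter, mem_pairwiseSumLE, Prod.ext_iff] at hv ⊢ <;>
      omega
  have split₀ := card_filter_add_card_filter_not (s := s) (p := fun v => v.1 = 0)
  have split₁ := card_filter_add_card_filter_not
    (s := s.filter fun v => ¬v.1 = 0) (p := fun v => v.2.1 = 0)
  have split₂ := card_filter_add_card_filter_not
    (s := (s.filter fun v => ¬v.1 = 0).filter fun v => ¬v.2.1 = 0) (p := fun v => v.2.2 = 0)
  omega

lemma card_pairwiseSumLE_add_card_succ (b : ℕ) :
    (#(pairwiseSumLE b) + #(pairwiseSumLE (b + 1))) * 2 = (b + 2) * (b ^ 2 + 4 * b + 5) := by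
  induction b with
  | zero => rfl
  | succ b ih =>
    have t₀ := card_triangle_mul_two b
    have t₁ := card_triangle_mul_two (b + 1)
    have t₂ := card_triangle_mul_two (b + 2)
    rw [card_pairwiseSumLE_add_two]
    linarith

lemma card_nonsingletonWeights_succ (a : ℕ) :
    #(nonsingletonWeights (a + 1)) = #(nonsingletonWeights a) + #(pairwiseSumLE (a + 1)) := by
  rw [← card_filter_add_card_filter_not (p := fun v => v.2.2.2 ≠ 0)]
  congr 1
  · refine card_nbij' (fun v => (v.1, v.2.1, v.2.2.1, v.2.2.2 - 1))
      (fun w => (w.1, w.2.1, w.2.2.1, w.2.2.2 + 1)) ?_ ?_ ?_ ?_ <;>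
      intro v hv <;>
      simp only [mem_coe, mem_filter, mem_nonsingletonWeights, Prod.ext_iff, true_and] at hv ⊢ <;>
      omega
  · refine card_nbij' (fun v => (v.1, v.2.1, v.2.2.1)) (fun w => (w.1, w.2.1, w.2.2, 0))
      ?_ ?_ ?_ ?_ <;>
      intro v hv <;>
      simp only [mem_coe, mem_filter, mem_pairwiseSumLE, mem_nonsingletonWeights, Prod.ext_iff,
        true_and] at hv ⊢ <;>
      omega

lemma card_nonsingletonWeights_even (m : ℕ) : #(nonsingletonWeights (2 * m)) = (m + 1) ^ 4 := by
  induction m with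
  | zero => rfl
  | succ m ih =>
    have h := card_pairwiseSumLE_add_card_succ (2 * m + 1)
    rw [show 2 * (m + 1) = 2 * m + 1 + 1 by ring, card_nonsingletonWeights_succ,
      card_nonsingletonWeights_succ, ih]
    linarith

lemma card_nonsingletonWeights_odd (m : ℕ) :
    #(nonsingletonWeights (2 * m + 1)) * 16 + 1 = (2 * m + 3) ^ 4 := by
  induction m with
  | zero => rfl
  | succ m ih =>
    have h := card_pairwiseSumLE_add_card_succ (2 * m + 2)
    rw [show 2 * (m + 1) + 1 = 2 * m + 1 + 1 + 1 by ring, card_nonsingletonWeights_succ,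
      card_nonsingletonWeights_succ]
    linarith

lemma card_nonsingletonWeights_mul_sixteen (a : ℕ) :
    #(nonsingletonWeights a) * 16 = (a + 2) ^ 4 - if Odd a then 1 else 0 := by
  obtain ⟨m, rfl | rfl⟩ := Nat.even_or_odd' a
  · rw [if_neg (Nat.not_odd_iff_even.2 (even_two_mul m)), card_nonsingletonWeights_even,
      Nat.sub_zero]
    ring
  · rw [if_pos (odd_two_mul_add_one m), show 2 * m + 1 + 2 = 2 * m + 3 by ring,
      ← card_nonsingletonWeights_odd m, Nat.add_sub_cancel]

def listAssignments (a : ℕ) : Set (Finset (Fin 3) → ℕ) :=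
  {x | x ∅ = 0 ∧
    ∀ i : Fin 3, ∑ S ∈ univ.filter (fun S : Finset (Fin 3) => i ∈ S), x S = a}

def assignmentOf (a : ℕ) (v : ℕ × ℕ × ℕ × ℕ) (S : Finset (Fin 3)) : ℕ :=
  if S = {0, 1} then v.1
  else if S = {0, 2} then v.2.1
  else if S = {1, 2} then v.2.2.1
  else if S = {0, 1, 2} then v.2.2.2
  else if S = {0} then a - (v.1 + v.2.1 + v.2.2.2)
  else if S = {1} then a - (v.1 + v.2.2.1 + v.2.2.2)
  else if S = {2} then a - (v.2.1 + v.2.2.1 + v.2.2.2)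
  else 0

def weightsOf (x : Finset (Fin 3) → ℕ) : ℕ × ℕ × ℕ × ℕ :=
  (x {0, 1}, x {0, 2}, x {1, 2}, x {0, 1, 2})

lemma leftInverse_weightsOf_assignmentOf (a : ℕ) :
    Function.LeftInverse weightsOf (assignmentOf a) := fun v => by
  simp +decide [weightsOf, assignmentOf]

lemma assignmentOf_injective (a : ℕ) : Function.Injective (assignmentOf a) :=
  (leftInverse_weightsOf_assignmentOf a).injective

lemma sum_filter_mem_fin_three (x : Finset (Fin 3) → ℕ) :
    ∑ S ∈ univ.filter (fun S : Finset (Fin 3) => 0 ∈ S), x S =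
        x {0} + x {0, 1} + x {0, 2} + x {0, 1, 2} ∧
      ∑ S ∈ univ.filter (fun S : Finset (Fin 3) => 1 ∈ S), x S =
        x {1} + x {0, 1} + x {1, 2} + x {0, 1, 2} ∧
      ∑ S ∈ univ.filter (fun S : Finset (Fin 3) => 2 ∈ S), x S =
        x {2} + x {0, 2} + x {1, 2} + x {0, 1, 2} := by
  rw [show univ.filter (fun S : Finset (Fin 3) => 0 ∈ S) = {{0}, {0, 1}, {0, 2}, {0, 1, 2}} by
      decide,
    show univ.filter (fun S : Finset (Fin 3) => 1 ∈ S) = {{1}, {0, 1}, {1, 2}, {0, 1, 2}} by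
      decide,
    show univ.filter (fun S : Finset (Fin 3) => 2 ∈ S) = {{2}, {0, 2}, {1, 2}, {0, 1, 2}} by
      decide]
  simp +decide [add_assoc]

lemma listAssignments_eq_image (a : ℕ) :
    listAssignments a = assignmentOf a '' nonsingletonWeights a := by
  ext x
  constructor
  · rintro ⟨empty, hsum⟩
    obtain ⟨sum₀, sum₁, sum₂⟩ := sum_filter_mem_fin_three x
    have h₀ := hsum 0
    have h₁ := hsum 1
    have h₂ := hsum 2
    refine ⟨weightsOf x, ?_, ?_⟩
    · simp only [mem_coe, mem_nonsingletonWeights, weightsOf]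
      omega
    · funext S
      obtain rfl | rfl | rfl | rfl | rfl | rfl | rfl | rfl : S = ∅ ∨ S = {0} ∨ S = {1} ∨
          S = {2} ∨ S = {0, 1} ∨ S = {0, 2} ∨ S = {1, 2} ∨ S = {0, 1, 2} := by
        revert S; decide
      all_goals simp +decide only [assignmentOf, weightsOf, reduceIte] <;> omega
  · rintro ⟨v, hv, rfl⟩
    obtain ⟨sum₀, sum₁, sum₂⟩ := sum_filter_mem_fin_three (assignmentOf a v)
    refine ⟨by simp +decide [assignmentOf], fun i => ?_⟩
    simp only [mem_coe, mem_nonsingletonWeights] at hv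
    obtain rfl | rfl | rfl : i = 0 ∨ i = 1 ∨ i = 2 := by omega
    all_goals
      simp only [sum₀, sum₁, sum₂]
      simp +decide only [assignmentOf, reduceIte]
      omega

end ListAssignment

open ListAssignment in
/-- Statement: the number of `a`-list assignments on 3 vertices up to
proper-intersection equivalence, i.e. vectors `x` of nonnegative integers
indexed by the nonempty subsets of `{1,2,3}` with `∑_{S ∋ i} x S = a` for each
vertex `i`, is `(a⁴ + 8a³ + 24a² + 32a + 16 − ε(a))/16` with `ε(a) = 1` for odd
`a` and `0` for even `a` (the division being exact). -/
theorem card_list_assignments_three (a : ℕ) :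
    Set.ncard {x : Finset (Fin 3) → ℕ |
        x ∅ = 0 ∧
        ∀ i : Fin 3, ∑ S ∈ Finset.univ.filter (fun S : Finset (Fin 3) => i ∈ S), x S = a}
      * 16 =
    a ^ 4 + 8 * a ^ 3 + 24 * a ^ 2 + 32 * a + 16 - (if Odd a then 1 else 0) := by
  rw [show a ^ 4 + 8 * a ^ 3 + 24 * a ^ 2 + 32 * a + 16 = (a + 2) ^ 4 by ring]
  change (listAssignments a).ncard * 16 = _
  rw [listAssignments_eq_image, Set.ncard_image_of_injective _ (assignmentOf_injective a),
    Set.ncard_coe_finset, card_nonsingletonWeights_mul_sixteen]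
end

section
/- For an odd cycle C_{2p+1} with p ≥ 1 and integers a ≥ b ≥ 1: sep(C_{2p+1}, a, b) = a − b if b ≤ a < 2b; sep = b + (p+1)(a − 2b) if 2b ≤ a ≤ 2b + b/p; and sep = a if a ≥ 2b + b/p. In particular, for K_3 = C_3: sep(K_3,a,b) = a−b if b ≤ a < 2b, 2a−3b if 2b ≤ a < 3b, and a if a ≥ 3b. -/
/-- The cycle on `m` vertices, with vertex set `Fin m` and edges between
consecutive vertices (mod `m`), is `(a,b,c)`-choosable. -/
def CycleChoosable (m a b c : ℕ) : Prop :=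
  ∀ L : Fin m → Finset ℤ,
    (∀ v, (L v).card = a) →
    (∀ u v : Fin m, u ≠ v → (((u : ℕ) + 1) % m = v ∨ ((v : ℕ) + 1) % m = u) →
      (L u ∩ L v).card ≤ c) →
    ∃ φ : Fin m → Finset ℤ,
      (∀ v, φ v ⊆ L v ∧ (φ v).card = b) ∧
      ∀ u v : Fin m, u ≠ v → (((u : ℕ) + 1) % m = v ∨ ((v : ℕ) + 1) % m = u) →
        Disjoint (φ u) (φ v)

namespace SepChoos

open Finset

lemma adj_elim {p : ℕ} (u v : Fin (2*p+1)) (huv : u ≠ v)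
    (h : ((u:ℕ)+1) % (2*p+1) = v ∨ ((v:ℕ)+1) % (2*p+1) = u) :
    ((u:ℕ) < 2*p ∧ (v:ℕ) = (u:ℕ)+1) ∨ ((v:ℕ) < 2*p ∧ (u:ℕ) = (v:ℕ)+1) ∨
      ((u:ℕ) = 2*p ∧ (v:ℕ) = 0) ∨ ((v:ℕ) = 2*p ∧ (u:ℕ) = 0) := by
  have hu := u.isLt; have hv := v.isLt
  have hne : (u:ℕ) ≠ (v:ℕ) := fun hh => huv (Fin.ext hh)
  rcases h with h | h
  · rcases Nat.lt_or_ge ((u:ℕ)+1) (2*p+1) with h' | h'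
    · rw [Nat.mod_eq_of_lt h'] at h; omega
    · have h2 : (u:ℕ) = 2*p := by omega
      rw [h2] at h
      have : (2*p+1) % (2*p+1) = 0 := Nat.mod_self _
      omega
  · rcases Nat.lt_or_ge ((v:ℕ)+1) (2*p+1) with h' | h'
    · rw [Nat.mod_eq_of_lt h'] at h; omega
    · have h2 : (v:ℕ) = 2*p := by omega
      rw [h2] at h
      have : (2*p+1) % (2*p+1) = 0 := Nat.mod_self _
      omega

lemma val_succ {p : ℕ} (i : Fin (2*p+1)) :
    ((i+1 : Fin (2*p+1)) : ℕ) = ((i:ℕ)+1) % (2*p+1) := by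
  rw [Fin.val_add, Fin.val_one']
  rcases Nat.eq_zero_or_pos p with hp | hp
  · subst hp; omega
  · rw [Nat.mod_eq_of_lt (show 1 < 2*p+1 by omega)]

lemma succ_ne {p : ℕ} (hp : 1 ≤ p) (i : Fin (2*p+1)) : i + 1 ≠ i := by
  intro h
  have := congrArg Fin.val h
  rw [val_succ] at this
  have hi := i.isLt
  rcases Nat.lt_or_ge ((i:ℕ)+1) (2*p+1) with h' | h'
  · rw [Nat.mod_eq_of_lt h'] at this; omega
  · have h2 : (i:ℕ)+1 = 2*p+1 := by omega
    rw [h2, Nat.mod_self] at this; omega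

lemma indep_card {p : ℕ} (S : Finset (Fin (2*p+1)))
    (hS : ∀ i ∈ S, i + 1 ∉ S) : S.card ≤ p := by
  have hdisj : Disjoint S (S.image (· + 1)) := by
    rw [Finset.disjoint_right]
    intro j hj
    simp only [mem_image] at hj
    obtain ⟨i, hi, rfl⟩ := hj
    exact fun hji => hS i hi hji
  have hcard : (S.image (· + 1)).card = S.card :=
    Finset.card_image_of_injective _ (add_left_injective 1)
  have h1 : (S ∪ S.image (· + 1)).card ≤ 2*p+1 := by
    have := card_le_card (subset_univ (S ∪ S.image (· + 1)))
    simpa using this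
  rw [card_union_of_disjoint hdisj, hcard] at h1
  omega

end SepChoos

namespace SepChoos
open Finset

lemma neg_lemma (p a b c : ℕ) (hp : 1 ≤ p) (hca : c ≤ a)
    (hblock : p * (a - min a (2*(a-c))) + (2*p+1) * (a - c) < (2*p+1) * b) :
    ¬ CycleChoosable (2*p+1) a b c := by
  intro hch
  set m := 2*p+1 with hm
  have hm3 : 3 ≤ m := by omega
  set s := a - c with hs
  set len := min a (2*s) with hlen
  set t := len - s with ht
  set q := 2*s - len with hq
  set k := a - len with hk
  have hsle : s ≤ len := by omega
  have hlen2 : len ≤ 2*s := by omega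
  have hlena : len ≤ a := by omega
  have hktq : k + t + t + q = a := by omega
  have hkt : k + t = c := by omega
  have htq : t + q = s := by omega
  -- offsets
  set offN : ℕ → ℕ := fun j => k + (min j m) * t + (j - m) * q with hoff
  have off_mono : ∀ {i j : ℕ}, i ≤ j → offN i ≤ offN j := by
    intro i j hij
    have h1 : min i m ≤ min j m := by omega
    have h2 : i - m ≤ j - m := by omega
    have h3 := Nat.mul_le_mul_right t h1
    have h4 := Nat.mul_le_mul_right q h2
    simp only [hoff]; omega
  have off_stepE : ∀ i : ℕ, i < m → offN i + t = offN (i+1) := by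
    intro i hi
    simp only [hoff]
    rw [Nat.min_eq_left (by omega), Nat.min_eq_left (by omega)]
    have h0 : (i - m) = 0 := by omega
    have h1 : (i+1-m) = 0 := by omega
    have h2 : (i+1)*t = i*t + t := by ring
    rw [h0, h1, h2]; omega
  have off_stepP : ∀ i : ℕ, m ≤ i → offN i + q = offN (i+1) := by
    intro i hi
    simp only [hoff]
    rw [Nat.min_eq_right (by omega), Nat.min_eq_right (by omega)]
    have h1 : (i+1-m) = (i-m)+1 := by omega
    have h2 : ((i-m)+1)*q = (i-m)*q + q := by ring
    rw [h1, h2]; omega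
  have off_k : ∀ j, k ≤ offN j := by intro j; simp only [hoff]; omega
  have off_top : offN (2*m) = k + m*t + m*q := by
    simp only [hoff]
    rw [Nat.min_eq_right (by omega)]
    have h1 : 2*m - m = m := by omega
    rw [h1]
  -- blocks
  set K : Finset ℤ := Finset.Ico (0:ℤ) (k:ℤ) with hK
  set E : ℕ → Finset ℤ := fun i => Finset.Ico (offN i : ℤ) ((offN i : ℤ) + t) with hE
  set P : ℕ → Finset ℤ := fun i => Finset.Ico ((offN (m+i) : ℤ)) ((offN (m+i) : ℤ) + q) with hP
  set prevv : ℕ → ℕ := fun i => (i + (m-1)) % m with hprev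
  have prev_lt : ∀ i, prevv i < m := fun i => Nat.mod_lt _ (by omega)
  have prev_spec : ∀ i, i < m → (i = 0 ∧ prevv i = m-1) ∨ (1 ≤ i ∧ prevv i = i - 1) := by
    intro i hi
    rcases Nat.eq_zero_or_pos i with h0 | h0
    · left; refine ⟨h0, ?_⟩
      simp only [hprev, h0, Nat.zero_add]
      exact Nat.mod_eq_of_lt (by omega)
    · right; refine ⟨h0, ?_⟩
      simp only [hprev]
      have h1 : i + (m-1) = (i-1) + m := by omega
      rw [h1, Nat.add_mod_right]
      exact Nat.mod_eq_of_lt (by omega)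
  have prev_self : ∀ i, i < m → prevv i ≠ i := by
    intro i hi
    rcases prev_spec i hi with ⟨h1, h2⟩ | ⟨h1, h2⟩ <;> omega
  -- disjointness
  have Ico_disj : ∀ (a1 b1 a2 b2 : ℤ), b1 ≤ a2 → Disjoint (Finset.Ico a1 b1) (Finset.Ico a2 b2) := by
    intro a1 b1 a2 b2 h
    rw [Finset.disjoint_left]; intro x hx1 hx2
    rw [Finset.mem_Ico] at hx1 hx2; omega
  have hEE : ∀ y z, y < m → z < m → y ≠ z → Disjoint (E y) (E z) := by
    have key : ∀ y z, y < z → z < m → Disjoint (E y) (E z) := by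
      intro y z hyz hz
      apply Ico_disj
      have h1 := off_stepE y (by omega)
      have h2 := off_mono (show y+1 ≤ z by omega)
      push_cast
      omega
    intro y z hy hz hyz
    rcases Nat.lt_or_ge y z with h | h
    · exact key y z h hz
    · exact (key z y (by omega) hy).symm
  have hEP : ∀ y z, y < m → Disjoint (E y) (P z) := by
    intro y z hy
    apply Ico_disj
    have h1 := off_stepE y hy
    have h2 := off_mono (show y+1 ≤ m+z by omega)
    push_cast
    omega
  have hPP : ∀ y z, y ≠ z → Disjoint (P y) (P z) := by
    have key : ∀ y z, y < z → Disjoint (P y) (P z) := by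
      intro y z hyz
      apply Ico_disj
      have h1 := off_stepP (m+y) (by omega)
      have h2 := off_mono (show m+y+1 ≤ m+z by omega)
      push_cast
      omega
    intro y z hyz
    rcases Nat.lt_or_ge y z with h | h
    · exact key y z h
    · exact (key z y (by omega)).symm
  have hKE : ∀ z, Disjoint K (E z) := by
    intro z
    apply Ico_disj
    have := off_k z
    push_cast
    omega
  have hKP : ∀ z, Disjoint K (P z) := by
    intro z
    apply Ico_disj
    have := off_k (m+z)
    push_cast
    omega
  -- the lists
  set L : Fin m → Finset ℤ := fun v => K ∪ E (prevv v.val) ∪ E v.val ∪ P v.val with hL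
  have Kcard : K.card = k := by simp [hK, Int.card_Ico]
  have Ecard : ∀ i, (E i).card = t := by intro i; simp [hE, Int.card_Ico]
  have Pcard : ∀ i, (P i).card = q := by intro i; simp [hP, Int.card_Ico]
  have Lcard : ∀ v, (L v).card = a := by
    intro v
    have hv := v.isLt
    have d1 : Disjoint K (E (prevv v.val)) := hKE _
    have d2 : Disjoint (K ∪ E (prevv v.val)) (E v.val) := by
      rw [Finset.disjoint_union_left]
      exact ⟨hKE _, hEE _ _ (prev_lt _) hv (prev_self _ hv)⟩
    have d3 : Disjoint (K ∪ E (prevv v.val) ∪ E v.val) (P v.val) := by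
      rw [Finset.disjoint_union_left, Finset.disjoint_union_left]
      exact ⟨⟨hKP _, hEP _ _ (prev_lt _)⟩, hEP _ _ hv⟩
    simp only [hL]
    rw [card_union_of_disjoint d3, card_union_of_disjoint d2, card_union_of_disjoint d1,
      Kcard, Ecard, Ecard, Pcard]
    omega
  -- intersection bound along an edge
  have inter_sub : ∀ (i j : ℕ) (hi : i < m) (hj : j < m), prevv j = i →
      L ⟨i, hi⟩ ∩ L ⟨j, hj⟩ ⊆ K ∪ E i := by
    intro i j hi hj hij
    intro x hx
    rw [Finset.mem_inter] at hx
    obtain ⟨hx1, hx2⟩ := hx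
    simp only [hL, Finset.mem_union, hij] at hx1 hx2 ⊢
    have hdd : ∀ {A B : Finset ℤ}, Disjoint A B → x ∈ A → x ∈ B → False := by
      intro A B hAB hxA hxB
      exact Finset.disjoint_left.mp hAB hxA hxB
    have hine : i ≠ j := by
      have := prev_self j hj; omega
    have hpij : prevv i ≠ j := by
      rcases prev_spec j hj with ⟨h1, h2⟩ | ⟨h1, h2⟩ <;>
        rcases prev_spec i hi with ⟨h3, h4⟩ | ⟨h3, h4⟩ <;> omega
    rcases hx1 with ((hx1 | hx1) | hx1) | hx1
    · exact Or.inl hx1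
    · -- x ∈ E (prevv i)
      exfalso
      rcases hx2 with ((hx2 | hx2) | hx2) | hx2
      · exact hdd (hKE (prevv i)) hx2 hx1
      · exact hdd (hEE _ _ (prev_lt i) hi (prev_self i hi)) hx1 hx2
      · exact hdd (hEE _ _ (prev_lt i) hj hpij) hx1 hx2
      · exact hdd (hEP _ _ (prev_lt i)) hx1 hx2
    · exact Or.inr hx1
    · -- x ∈ P i
      exfalso
      rcases hx2 with ((hx2 | hx2) | hx2) | hx2
      · exact hdd (hKP i) hx2 hx1
      · exact hdd (hEP _ _ hi) hx2 hx1
      · exact hdd (hEP _ _ hj) hx2 hx1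
      · exact hdd (hPP _ _ hine) hx1 hx2
  have inter_card : ∀ (i j : ℕ) (hi : i < m) (hj : j < m), prevv j = i →
      (L ⟨i, hi⟩ ∩ L ⟨j, hj⟩).card ≤ c := by
    intro i j hi hj hij
    calc (L ⟨i, hi⟩ ∩ L ⟨j, hj⟩).card ≤ (K ∪ E i).card :=
          card_le_card (inter_sub i j hi hj hij)
      _ ≤ K.card + (E i).card := card_union_le _ _
      _ = c := by rw [Kcard, Ecard]; omega
  -- prev of successor
  have prev_succ : ∀ (u : ℕ), u < m - 1 → prevv (u+1) = u := by
    intro u hu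
    rcases prev_spec (u+1) (by omega) with ⟨h1, h2⟩ | ⟨h1, h2⟩ <;> omega
  have prev_zero : prevv 0 = m - 1 := by
    rcases prev_spec 0 (by omega) with ⟨h1, h2⟩ | ⟨h1, h2⟩ <;> omega
  -- the separation hypothesis of CycleChoosable
  have hsep : ∀ u v : Fin m, u ≠ v → (((u : ℕ) + 1) % m = v ∨ ((v : ℕ) + 1) % m = u) →
      (L u ∩ L v).card ≤ c := by
    intro u v huv hadj
    rcases adj_elim u v huv hadj with ⟨h1, h2⟩ | ⟨h1, h2⟩ | ⟨h1, h2⟩ | ⟨h1, h2⟩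
    · have := inter_card u.val v.val u.isLt v.isLt (by rw [h2]; exact prev_succ _ (by omega))
      simpa using this
    · have := inter_card v.val u.val v.isLt u.isLt (by rw [h2]; exact prev_succ _ (by omega))
      rw [Finset.inter_comm] at this
      simpa using this
    · have := inter_card u.val v.val u.isLt v.isLt (by rw [h2, prev_zero]; omega)
      simpa using this
    · have := inter_card v.val u.val v.isLt u.isLt (by rw [h2, prev_zero]; omega)
      rw [Finset.inter_comm] at this
      simpa using this
  -- apply choosability
  obtain ⟨φ, hφ1, hφ2⟩ := hch L Lcard hsep
  -- counting
  set U : Finset ℤ := Finset.Ico (0:ℤ) (offN (2*m) : ℤ) with hU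
  have LsubU : ∀ v, L v ⊆ U := by
    intro v
    have hv := v.isLt
    simp only [hL, hU]
    have hIco : ∀ (lo hi : ℤ), (0:ℤ) ≤ lo → hi ≤ (offN (2*m) : ℤ) →
        Finset.Ico lo hi ⊆ Finset.Ico (0:ℤ) (offN (2*m) : ℤ) := by
      intro lo hi h1 h2
      exact Finset.Ico_subset_Ico h1 h2
    have hsubE : ∀ z, z < m → E z ⊆ Finset.Ico (0:ℤ) (offN (2*m) : ℤ) := by
      intro z hz
      apply hIco _ _ (by positivity)
      have h1 := off_stepE z hz
      have h2 := off_mono (show z+1 ≤ 2*m by omega)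
      push_cast
      omega
    have hsubP : ∀ z, z < m → P z ⊆ Finset.Ico (0:ℤ) (offN (2*m) : ℤ) := by
      intro z hz
      apply hIco _ _ (by positivity)
      have h1 := off_stepP (m+z) (by omega)
      have h2 := off_mono (show m+z+1 ≤ 2*m by omega)
      push_cast
      omega
    have hsubK : K ⊆ Finset.Ico (0:ℤ) (offN (2*m) : ℤ) := by
      apply hIco _ _ le_rfl
      have := off_k (2*m)
      push_cast
      omega
    exact Finset.union_subset (Finset.union_subset (Finset.union_subset hsubK
      (hsubE _ (prev_lt _))) (hsubE _ hv)) (hsubP _ hv)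
  have φsubU : ∀ v, φ v ⊆ U := fun v => (hφ1 v).1.trans (LsubU v)
  -- sum identity
  have hsum : ∑ v : Fin m, (φ v).card = ∑ x ∈ U, (univ.filter (fun v : Fin m => x ∈ φ v)).card := by
    have h1 : ∀ v : Fin m, (φ v).card = ∑ x ∈ U, (if x ∈ φ v then 1 else 0) := by
      intro v
      rw [← Finset.card_filter]
      congr 1
      rw [Finset.filter_mem_eq_inter, Finset.inter_eq_right.mpr (φsubU v)]
    rw [Finset.sum_congr rfl (fun v _ => h1 v), Finset.sum_comm]
    refine Finset.sum_congr rfl (fun x _ => ?_)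
    rw [Finset.card_filter]
  -- bounds per colour
  have bound_all : ∀ x : ℤ, (univ.filter (fun v : Fin m => x ∈ φ v)).card ≤ p := by
    intro x
    apply indep_card
    intro i hi hi1
    rw [Finset.mem_filter] at hi hi1
    have hne : i ≠ i + 1 := (succ_ne hp i).symm
    have hdisj := hφ2 i (i+1) hne (Or.inl (val_succ i).symm)
    exact Finset.disjoint_left.mp hdisj hi.2 hi1.2
  have bound_one : ∀ x : ℤ, x ∈ U \ K → (univ.filter (fun v : Fin m => x ∈ φ v)).card ≤ 1 := by
    intro x hxUK
    rw [Finset.mem_sdiff] at hxUK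
    obtain ⟨hxU, hxK⟩ := hxUK
    rw [Finset.card_le_one]
    intro v₁ hv₁ v₂ hv₂
    rw [Finset.mem_filter] at hv₁ hv₂
    by_contra hne
    have hx1 : x ∈ L v₁ := (hφ1 v₁).1 hv₁.2
    have hx2 : x ∈ L v₂ := (hφ1 v₂).1 hv₂.2
    simp only [hL, Finset.mem_union] at hx1 hx2
    have hdd : ∀ {A B : Finset ℤ}, Disjoint A B → x ∈ A → x ∈ B → False := by
      intro A B hAB hxA hxB
      exact Finset.disjoint_left.mp hAB hxA hxB
    -- x is in some E or P block on each side
    have hx1' : x ∈ E (prevv v₁.val) ∨ x ∈ E v₁.val ∨ x ∈ P v₁.val := by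
      rcases hx1 with ((h | h) | h) | h
      · exact absurd h hxK
      · exact Or.inl h
      · exact Or.inr (Or.inl h)
      · exact Or.inr (Or.inr h)
    have hx2' : x ∈ E (prevv v₂.val) ∨ x ∈ E v₂.val ∨ x ∈ P v₂.val := by
      rcases hx2 with ((h | h) | h) | h
      · exact absurd h hxK
      · exact Or.inl h
      · exact Or.inr (Or.inl h)
      · exact Or.inr (Or.inr h)
    -- helper: adjacency from prev relation
    have adj_of_prev : ∀ (y z : Fin m), prevv z.val = y.val → (((y:ℕ)+1) % m = z.val) := by
      intro y z hpz
      rcases prev_spec z.val z.isLt with ⟨h1, h2⟩ | ⟨h1, h2⟩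
      · have : (y:ℕ) = m - 1 := by omega
        rw [this, h1]
        have : (m - 1) + 1 = m := by omega
        rw [this, Nat.mod_self]
      · have : (y:ℕ) = z.val - 1 := by omega
        have h3 : (y:ℕ) + 1 = z.val := by omega
        rw [h3]
        exact Nat.mod_eq_of_lt z.isLt
    have disj_of_prev : ∀ (y z : Fin m), x ∈ φ y → x ∈ φ z → prevv z.val = y.val → False := by
      intro y z hxy hxz hpz
      have hyz : y ≠ z := by
        intro h
        subst h
        exact prev_self y.val y.isLt hpz
      have hdisj := hφ2 y z hyz (Or.inl (adj_of_prev y z hpz))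
      exact Finset.disjoint_left.mp hdisj hxy hxz
    have hvne : v₁.val ≠ v₂.val := fun h => hne (Fin.ext h)
    have hpne : prevv v₁.val ≠ prevv v₂.val := by
      rcases prev_spec v₁.val v₁.isLt with ⟨h1, h2⟩ | ⟨h1, h2⟩ <;>
        rcases prev_spec v₂.val v₂.isLt with ⟨h3, h4⟩ | ⟨h3, h4⟩ <;>
          first
          | omega
          | (have := v₁.isLt; have := v₂.isLt; omega)
    rcases hx1' with h1 | h1 | h1 <;> rcases hx2' with h2 | h2 | h2
    · exact hdd (hEE _ _ (prev_lt _) (prev_lt _) hpne) h1 h2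
    · by_cases heq : prevv v₁.val = v₂.val
      · exact disj_of_prev v₂ v₁ hv₂.2 hv₁.2 heq
      · exact hdd (hEE _ _ (prev_lt _) v₂.isLt heq) h1 h2
    · exact hdd (hEP _ _ (prev_lt _)) h1 h2
    · by_cases heq : prevv v₂.val = v₁.val
      · exact disj_of_prev v₁ v₂ hv₁.2 hv₂.2 heq
      · exact hdd (hEE _ _ v₁.isLt (prev_lt _) (fun h => heq h.symm)) h1 h2
    · exact hdd (hEE _ _ v₁.isLt v₂.isLt hvne) h1 h2
    · exact hdd (hEP _ _ v₁.isLt) h1 h2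
    · exact hdd (hEP _ _ (prev_lt _)) h2 h1
    · exact hdd (hEP _ _ v₂.isLt) h2 h1
    · exact hdd (hPP _ _ hvne) h1 h2
  -- final counting
  have hKU : K ⊆ U := by
    apply Finset.Ico_subset_Ico le_rfl
    have := off_k (2*m)
    exact_mod_cast this
  have hUcard : U.card = offN (2*m) := by simp [hU, Int.card_Ico]
  have hUKcard : (U \ K).card = m*t + m*q := by
    rw [Finset.card_sdiff_of_subset hKU, hUcard, Kcard, off_top]
    omega
  have hSum1 : ∑ v : Fin m, (φ v).card = m * b := by
    rw [Finset.sum_congr rfl (fun v _ => (hφ1 v).2)]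
    simp [Finset.card_univ, mul_comm]
  have hSplit : ∑ x ∈ U, (univ.filter (fun v : Fin m => x ∈ φ v)).card
      = ∑ x ∈ U \ K, (univ.filter (fun v : Fin m => x ∈ φ v)).card
        + ∑ x ∈ K, (univ.filter (fun v : Fin m => x ∈ φ v)).card :=
    (Finset.sum_sdiff hKU).symm
  have hB1 : ∑ x ∈ K, (univ.filter (fun v : Fin m => x ∈ φ v)).card ≤ k * p := by
    calc ∑ x ∈ K, (univ.filter (fun v : Fin m => x ∈ φ v)).card
        ≤ ∑ _x ∈ K, p := Finset.sum_le_sum (fun x _ => bound_all x)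
      _ = k * p := by rw [Finset.sum_const, Kcard, smul_eq_mul]
  have hB2 : ∑ x ∈ U \ K, (univ.filter (fun v : Fin m => x ∈ φ v)).card ≤ m*t + m*q := by
    calc ∑ x ∈ U \ K, (univ.filter (fun v : Fin m => x ∈ φ v)).card
        ≤ ∑ _x ∈ U \ K, 1 := Finset.sum_le_sum (fun x hx => bound_one x hx)
      _ = m*t + m*q := by rw [Finset.sum_const, hUKcard, smul_eq_mul, mul_one]
  have hmtq : m*t + m*q = m*s := by
    have : m*(t+q) = m*s := by rw [htq]
    rw [← this]; ring
  have : m * b ≤ p * k + m * s := by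
    rw [← hSum1, hsum, hSplit]
    have hcomm : k * p = p * k := Nat.mul_comm k p
    have := hmtq
    omega
  omega

end SepChoos

namespace SepChoos

open Finset

lemma pick_avoiding (b t : ℕ) (A Y : Finset ℤ) (hA : b ≤ A.card)
    (h : b ≤ (A \ Y).card + t) :
    ∃ z : Finset ℤ, z ⊆ A ∧ z.card = b ∧ (z ∩ Y).card ≤ t := by
  set u := min b (A \ Y).card with hu
  obtain ⟨z₁, hz₁sub, hz₁card⟩ := Finset.exists_subset_card_eq
    (show u ≤ (A \ Y).card from Nat.min_le_right _ _)
  obtain ⟨z, hz₁z, hzA, hzcard⟩ := Finset.exists_subsuperset_card_eq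
    (hz₁sub.trans Finset.sdiff_subset) (show z₁.card ≤ b by omega) hA
  refine ⟨z, hzA, hzcard, ?_⟩
  have hsub : z ∩ Y ⊆ z \ z₁ := by
    intro x hx
    rw [Finset.mem_inter] at hx
    rw [Finset.mem_sdiff]
    refine ⟨hx.1, fun hxz₁ => ?_⟩
    have h2 := hz₁sub hxz₁
    rw [Finset.mem_sdiff] at h2
    exact h2.2 hx.2
  have hcard := Finset.card_le_card hsub
  rw [Finset.card_sdiff_of_subset hz₁z] at hcard
  omega

lemma core_pos (p a b d : ℕ) (hp : 1 ≤ p) (hb : 1 ≤ b) (ha : a = 2*b + d)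
    (M : ℕ → Finset ℤ) (hcard : ∀ j, (M j).card = a)
    (hseam : (M 0 ∩ M (2*p)).card ≤ b + (p+1)*d) :
    ∃ ψ : ℕ → Finset ℤ, (∀ j, j ≤ 2*p → ψ j ⊆ M j ∧ (ψ j).card = b) ∧
      (∀ j, j < 2*p → Disjoint (ψ j) (ψ (j+1))) ∧ Disjoint (ψ 0) (ψ (2*p)) := by
  classical
  have haZ : (a:ℤ) = 2*b + d := by exact_mod_cast ha
  -- choose φ₀ avoiding M (2p) as much as possible
  obtain ⟨φ₀, hφ₀M, hφ₀card, hφ₀T⟩ :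
      ∃ z : Finset ℤ, z ⊆ M 0 ∧ z.card = b ∧ (z ∩ M (2*p)).card ≤ p*d := by
    apply pick_avoiding
    · rw [hcard 0]; omega
    · have h1 := Finset.card_sdiff_add_card_inter (M 0) (M (2*p))
      have h2 := hcard 0
      have h3 : (p+1)*d = p*d + d := by ring
      omega
  set T := φ₀ ∩ M (2*p) with hT
  have hTb : T.card ≤ b := hφ₀card ▸ card_le_card inter_subset_left
  -- the chain of sets and budgets
  set X : ℕ → Finset ℤ := fun i => Nat.rec T (fun i Xi => M (2*p - i) \ Xi) i with hX
  have hX0 : X 0 = T := rfl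
  have hXs : ∀ i, X (i+1) = M (2*p - i) \ X i := fun i => rfl
  set uu : ℕ → ℕ := fun i => (X i ∩ M (2*p - i)).card with huu
  set τ : ℕ → ℤ := fun i => Nat.rec 0 (fun i ti => (b:ℤ) + d + ti - uu i) i with hτ
  have hτ0 : τ 0 = 0 := rfl
  have hτs : ∀ i, τ (i+1) = (b:ℤ) + d + τ i - uu i := fun i => rfl
  have huua : ∀ i, uu i + uu (i+1) ≤ a := by
    intro i
    have h1 : uu (i+1) ≤ (X (i+1)).card := card_le_card inter_subset_left
    have h2 : (X (i+1)).card + (M (2*p-i) ∩ X i).card = a := by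
      rw [hXs]
      have := Finset.card_sdiff_add_card_inter (M (2*p-i)) (X i)
      rw [← hcard (2*p-i)]
      exact this
    have h3 : (M (2*p-i) ∩ X i).card = uu i := by rw [Finset.inter_comm]
    omega
  have hbound : ∀ k : ℕ, (k:ℤ)*d ≤ τ (2*k) ∧ (b:ℤ) + d - T.card + k*d ≤ τ (2*k+1) := by
    intro k
    induction k with
    | zero =>
      refine ⟨by simp [hτ0], ?_⟩
      rw [show 2*0+1 = 0+1 by omega, hτs 0, hτ0]
      have h1 : uu 0 ≤ T.card := by
        rw [huu]
        exact card_le_card inter_subset_left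
      push_cast
      omega
    | succ k ih =>
      obtain ⟨ih1, ih2⟩ := ih
      have e1 : τ (2*k+2) = (b:ℤ) + d + τ (2*k+1) - uu (2*k+1) := hτs (2*k+1)
      have e2 : τ (2*k+1) = (b:ℤ) + d + τ (2*k) - uu (2*k) := hτs (2*k)
      have e3 : τ (2*k+2+1) = (b:ℤ) + d + τ (2*k+2) - uu (2*k+2) := hτs (2*k+2)
      have h1 := huua (2*k)
      have h2 := huua (2*k+1)
      have hx1 : uu (2*k+1+1) = uu (2*k+2) := by norm_num
      have hx2 : τ (2*k+1+1) = τ (2*k+2) := by norm_num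
      have hr1 : ((k:ℤ)+1)*d = k*d + d := by ring
      rw [show 2*(k+1)+1 = 2*k+2+1 from by ring, show 2*(k+1) = 2*k+2 from by ring]
      push_cast
      constructor <;> omega
  have hτnon : ∀ i, 0 ≤ τ i := by
    intro i
    have hkd : ∀ k : ℕ, (0:ℤ) ≤ (k:ℤ)*d := fun k => by positivity
    rcases Nat.even_or_odd i with ⟨k, hk⟩ | ⟨k, hk⟩
    · have := (hbound k).1
      have := hkd k
      rw [show i = 2*k by omega]
      omega
    · have := (hbound k).2
      have := hkd k
      have hTb' : ((T.card : ℤ)) ≤ b := by exact_mod_cast hTb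
      rw [show i = 2*k+1 by omega]
      push_cast
      omega
  -- the inductive step
  have hstep : ∀ j, 1 ≤ j → j + 1 ≤ 2*p → ∀ prev : Finset ℤ, prev.card = b →
      ((prev ∩ X (2*p - j)).card : ℤ) ≤ τ (2*p - j) →
      ∃ z : Finset ℤ, z ⊆ M (j+1) \ prev ∧ z.card = b ∧
        ((z ∩ X (2*p - (j+1))).card : ℤ) ≤ τ (2*p - (j+1)) := by
    intro j hj1 hjp prev hprevcard hprevX
    set i := 2*p - (j+1) with hi
    have hij : 2*p - i = j + 1 := by omega
    have hii : 2*p - j = i + 1 := by omega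
    have hA : b ≤ (M (j+1) \ prev).card := by
      have h1 := Finset.card_sdiff_add_card_inter (M (j+1)) prev
      have h2 : (M (j+1) ∩ prev).card ≤ b :=
        hprevcard ▸ card_le_card inter_subset_right
      have := hcard (j+1)
      omega
    have hXi1 : X (i+1) = M (j+1) \ X i := by rw [hXs, hij]
    have hτi := hτnon i
    have hkey : (b:ℤ) ≤ (((M (j+1) \ prev) \ X i).card : ℤ) + τ i := by
      have e1 : (M (j+1) \ prev) \ X i = X (i+1) \ prev := by
        rw [hXi1]
        ext x
        simp only [Finset.mem_sdiff]
        tauto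
      have e2 : (X (i+1) \ prev).card + (X (i+1) ∩ prev).card = (X (i+1)).card :=
        Finset.card_sdiff_add_card_inter _ _
      have e3 : (X (i+1)).card + (X i ∩ M (j+1)).card = a := by
        rw [hXi1]
        have h4 := Finset.card_sdiff_add_card_inter (M (j+1)) (X i)
        rw [Finset.inter_comm (X i)]
        rw [← hcard (j+1)]
        exact h4
      have e4 : ((X (i+1) ∩ prev).card : ℤ) ≤ τ (i+1) := by
        rw [Finset.inter_comm]
        rw [hii] at hprevX
        exact hprevX
      have e5 : τ (i+1) = (b:ℤ) + d + τ i - uu i := hτs i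
      have e6 : uu i = (X i ∩ M (j+1)).card := by simp only [huu, hij]
      rw [e1]
      have e2' : ((X (i+1) \ prev).card : ℤ) + ((X (i+1) ∩ prev).card : ℤ) = ((X (i+1)).card : ℤ) := by
        exact_mod_cast e2
      have e3' : ((X (i+1)).card : ℤ) + ((X i ∩ M (j+1)).card : ℤ) = (a:ℤ) := by
        exact_mod_cast e3
      rw [e6] at e5
      omega
    obtain ⟨z, hz1, hz2, hz3⟩ := pick_avoiding b (τ i).toNat (M (j+1) \ prev) (X i) hA (by omega)
    refine ⟨z, hz1, hz2, ?_⟩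
    have h5 : ((z ∩ X i).card : ℤ) ≤ ((τ i).toNat : ℤ) := by exact_mod_cast hz3
    rwa [Int.toNat_of_nonneg hτi] at h5
  -- base step
  have hbase : ∃ z : Finset ℤ, z ⊆ M (0+1) \ φ₀ ∧ z.card = b ∧
      ((z ∩ X (2*p - (0+1))).card : ℤ) ≤ τ (2*p - (0+1)) := by
    have hA : b ≤ (M 1 \ φ₀).card := by
      have h1 := Finset.card_sdiff_add_card_inter (M 1) φ₀
      have h2 : (M 1 ∩ φ₀).card ≤ b := hφ₀card ▸ card_le_card inter_subset_right
      have := hcard 1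
      omega
    obtain ⟨z, h1, h2⟩ := Finset.exists_subset_card_eq hA
    refine ⟨z, h1, h2, ?_⟩
    have h3 : ((z ∩ X (2*p-1)).card : ℤ) ≤ b := by
      have hzz : z ∩ X (2*p-1) ⊆ z := Finset.inter_subset_left
      have := card_le_card hzz
      rw [h2] at this
      exact_mod_cast this
    have h4 : (b:ℤ) ≤ τ (2*p - 1) := by
      have h5 := (hbound (p-1)).2
      rw [show 2*(p-1)+1 = 2*p-1 by omega] at h5
      have h6 : ((p-1 : ℕ):ℤ) = (p:ℤ) - 1 := by
        rw [Nat.cast_sub hp]; simp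
      rw [h6] at h5
      have h7 : ((p:ℤ)-1)*d = p*d - d := by ring
      have h8 : ((T.card : ℤ)) ≤ (p:ℤ)*d := by
        have : ((T.card : ℤ)) ≤ ((p*d : ℕ) : ℤ) := by exact_mod_cast hφ₀T
        push_cast at this
        exact this
      omega
    have hnn : 2*p - (0+1) = 2*p - 1 := by norm_num
    rw [hnn]
    omega
  -- define ψ by recursion with choice
  set ψ : ℕ → Finset ℤ := fun j => Nat.rec φ₀
    (fun j prev => if h : ∃ z : Finset ℤ, z ⊆ M (j+1) \ prev ∧ z.card = b ∧
        ((z ∩ X (2*p - (j+1))).card : ℤ) ≤ τ (2*p - (j+1)) then h.choose else ∅) j with hψ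
  have hψ0 : ψ 0 = φ₀ := rfl
  have hψs : ∀ j, ψ (j+1) = if h : ∃ z : Finset ℤ, z ⊆ M (j+1) \ (ψ j) ∧ z.card = b ∧
      ((z ∩ X (2*p - (j+1))).card : ℤ) ≤ τ (2*p - (j+1)) then h.choose else ∅ := fun j => rfl
  have hInv : ∀ j, j + 1 ≤ 2*p →
      ψ (j+1) ⊆ M (j+1) \ (ψ j) ∧ (ψ (j+1)).card = b ∧
        ((ψ (j+1) ∩ X (2*p - (j+1))).card : ℤ) ≤ τ (2*p - (j+1)) := by
    intro j
    induction j with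
    | zero =>
      intro _
      rw [hψs 0, hψ0]
      rw [dif_pos hbase]
      exact hbase.choose_spec
    | succ j ih =>
      intro hjp
      have ihj := ih (by omega)
      obtain ⟨hsub, hcardj, hXj⟩ := ihj
      have hst := hstep (j+1) (by omega) hjp (ψ (j+1)) hcardj hXj
      rw [hψs (j+1), dif_pos hst]
      exact hst.choose_spec
  refine ⟨ψ, ?_, ?_, ?_⟩
  · intro j hj
    rcases Nat.eq_zero_or_pos j with h0 | h0
    · subst h0
      exact ⟨hψ0 ▸ hφ₀M, hψ0 ▸ hφ₀card⟩
    · obtain ⟨j', rfl⟩ : ∃ j', j = j' + 1 := ⟨j - 1, by omega⟩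
      obtain ⟨h1, h2, _⟩ := hInv j' hj
      exact ⟨h1.trans Finset.sdiff_subset, h2⟩
  · intro j hj
    obtain ⟨h1, _, _⟩ := hInv j hj
    rw [Finset.disjoint_right]
    intro x hx
    have := h1 hx
    rw [Finset.mem_sdiff] at this
    exact this.2
  · obtain ⟨j', hj'⟩ : ∃ j', 2*p = j' + 1 := ⟨2*p - 1, by omega⟩
    obtain ⟨h1, _, h3⟩ := hInv j' (by omega)
    have hid : 2*p - (j'+1) = 0 := by omega
    rw [hid, hX0, hτ0] at h3
    have h4 : ψ (j'+1) ∩ T = ∅ := by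
      rw [← Finset.card_eq_zero]
      omega
    rw [hψ0, hj', Finset.disjoint_left]
    intro x hxφ hxψ
    have hxM : x ∈ M (j'+1) := by
      have h5 := h1 hxψ
      rw [Finset.mem_sdiff] at h5
      exact h5.1
    have hxT : x ∈ T := by
      rw [hT, Finset.mem_inter]
      refine ⟨hxφ, ?_⟩
      rw [hj']
      exact hxM
    have hmem : x ∈ ψ (j'+1) ∩ T := Finset.mem_inter.mpr ⟨hxψ, hxT⟩
    rw [h4] at hmem
    exact absurd hmem (Finset.notMem_empty x)

lemma core_simple (n a b : ℕ) (hn : 1 ≤ n) (hb : b ≤ a) (M : ℕ → Finset ℤ)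
    (hcard : ∀ j, (M j).card = a)
    (hint : ∀ j, j < n → (M j ∩ M (j+1)).card ≤ a - b)
    (hseam : (M 0 ∩ M n).card ≤ a - b) :
    ∃ ψ : ℕ → Finset ℤ, (∀ j, j ≤ n → ψ j ⊆ M j ∧ (ψ j).card = b) ∧
      (∀ j, j < n → Disjoint (ψ j) (ψ (j+1))) ∧ Disjoint (ψ 0) (ψ n) := by
  classical
  have hg : ∀ j, ∃ z : Finset ℤ, z ⊆ M j \ M (j+1) ∧ z.card = min b ((M j \ M (j+1)).card) := by
    intro j
    exact Finset.exists_subset_card_eq (Nat.min_le_right _ _)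
  choose g hg1 hg2 using hg
  have hgcard : ∀ j, j < n → (g j).card = b := by
    intro j hj
    rw [hg2 j]
    have h1 := Finset.card_sdiff_add_card_inter (M j) (M (j+1))
    have h2 := hint j hj
    have h3 := hcard j
    omega
  obtain ⟨h, hh1, hh2⟩ : ∃ z : Finset ℤ, z ⊆ M n \ g 0 ∧ z.card = b := by
    apply Finset.exists_subset_card_eq
    have h1 := Finset.card_sdiff_add_card_inter (M n) (g 0)
    have h2 : (M n ∩ g 0).card ≤ (M 0 ∩ M n).card := by
      apply card_le_card
      intro x hx
      rw [Finset.mem_inter] at hx ⊢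
      have := (hg1 0) hx.2
      rw [Finset.mem_sdiff] at this
      exact ⟨this.1, hx.1⟩
    have h3 := hcard n
    omega
  refine ⟨fun j => if j < n then g j else h, ?_, ?_, ?_⟩
  · intro j hj
    by_cases hjn : j < n
    · simp only [if_pos hjn]
      exact ⟨(hg1 j).trans Finset.sdiff_subset, hgcard j hjn⟩
    · have hjn' : j = n := by omega
      subst hjn'
      simp only [if_neg hjn]
      exact ⟨hh1.trans Finset.sdiff_subset, hh2⟩
  · intro j hj
    simp only [if_pos hj]
    have hsub : (if j + 1 < n then g (j+1) else h) ⊆ M (j+1) := by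
      by_cases hj1 : j + 1 < n
      · simp only [if_pos hj1]
        exact (hg1 (j+1)).trans Finset.sdiff_subset
      · have hj1n : j + 1 = n := by omega
        rw [if_neg hj1, hj1n]
        exact hh1.trans Finset.sdiff_subset
    rw [Finset.disjoint_left]
    intro x hxg hx2
    have h5 := hg1 j hxg
    rw [Finset.mem_sdiff] at h5
    exact h5.2 (hsub hx2)
  · have h0n : (0:ℕ) < n := hn
    simp only [if_pos h0n, if_neg (lt_irrefl n)]
    rw [Finset.disjoint_left]
    intro x hxg hxh
    have h5 := hh1 hxh
    rw [Finset.mem_sdiff] at h5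
    exact h5.2 hxg

end SepChoos

namespace SepChoos
open Finset

lemma cyc_of_path (p a b c : ℕ) (hp : 1 ≤ p)
    (hcore : ∀ M : ℕ → Finset ℤ, (∀ j, (M j).card = a) →
      (∀ j, j < 2*p → (M j ∩ M (j+1)).card ≤ c) → ((M 0 ∩ M (2*p)).card ≤ c) →
      ∃ ψ : ℕ → Finset ℤ, (∀ j, j ≤ 2*p → ψ j ⊆ M j ∧ (ψ j).card = b) ∧
        (∀ j, j < 2*p → Disjoint (ψ j) (ψ (j+1))) ∧ Disjoint (ψ 0) (ψ (2*p))) :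
    CycleChoosable (2*p+1) a b c := by
  intro L hL hsep
  have hm0 : 0 < 2*p+1 := by omega
  obtain ⟨M, hMdef⟩ : ∃ M : ℕ → Finset ℤ,
      ∀ j, M j = L ⟨j % (2*p+1), Nat.mod_lt _ hm0⟩ :=
    ⟨fun j => L ⟨j % (2*p+1), Nat.mod_lt _ hm0⟩, fun j => rfl⟩
  have hMnat : ∀ j, ∀ (hj : j < 2*p+1), M j = L ⟨j, hj⟩ := by
    intro j hj
    rw [hMdef]
    congr 1
    exact Fin.ext (by simp [Nat.mod_eq_of_lt hj])
  have hMv : ∀ v : Fin (2*p+1), M (v:ℕ) = L v := by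
    intro v
    rw [hMnat (v:ℕ) v.isLt]
  have hcard : ∀ j, (M j).card = a := by
    intro j
    rw [hMdef]
    exact hL _
  have hint : ∀ j, j < 2*p → (M j ∩ M (j+1)).card ≤ c := by
    intro j hj
    rw [hMnat j (by omega), hMnat (j+1) (by omega)]
    apply hsep ⟨j, by omega⟩ ⟨j+1, by omega⟩
    · exact Fin.ne_of_val_ne (by simp)
    · left
      simp [Nat.mod_eq_of_lt (show j+1 < 2*p+1 by omega)]
  have hseam : (M 0 ∩ M (2*p)).card ≤ c := by
    rw [hMnat 0 (by omega), hMnat (2*p) (by omega), Finset.inter_comm]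
    apply hsep ⟨2*p, by omega⟩ ⟨0, by omega⟩
    · exact Fin.ne_of_val_ne (by simp; omega)
    · left
      simp
  obtain ⟨ψ, h1, h2, h3⟩ := hcore M hcard hint hseam
  refine ⟨fun v => ψ (v:ℕ), ?_, ?_⟩
  · intro v
    obtain ⟨hsub, hcd⟩ := h1 (v:ℕ) (by omega)
    rw [hMv v] at hsub
    exact ⟨hsub, hcd⟩
  · intro u v huv hadj
    show Disjoint (ψ (u:ℕ)) (ψ (v:ℕ))
    rcases adj_elim u v huv hadj with ⟨ha1, ha2⟩ | ⟨ha1, ha2⟩ | ⟨ha1, ha2⟩ | ⟨ha1, ha2⟩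
    · rw [ha2]
      exact h2 (u:ℕ) ha1
    · rw [ha2]
      exact (h2 (v:ℕ) ha1).symm
    · rw [ha1, ha2]
      exact h3.symm
    · rw [ha1, ha2]
      exact h3

lemma cyc_simple (p a b c : ℕ) (hp : 1 ≤ p) (hba : b ≤ a) (hc : c ≤ a - b) :
    CycleChoosable (2*p+1) a b c := by
  apply cyc_of_path p a b c hp
  intro M hcard hint hseam
  exact core_simple (2*p) a b (by omega) hba M hcard
    (fun j hj => le_trans (hint j hj) hc) (le_trans hseam hc)

lemma cyc_main (p a b c : ℕ) (hp : 1 ≤ p) (hb : 1 ≤ b) (h2b : 2*b ≤ a)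
    (hc : c ≤ b + (p+1)*(a - 2*b)) :
    CycleChoosable (2*p+1) a b c := by
  apply cyc_of_path p a b c hp
  intro M hcard hint hseam
  exact core_pos p a b (a - 2*b) hp hb (by omega) M hcard (le_trans hseam hc)

lemma cyc_mono (m a b c c' : ℕ) (hcc : c' ≤ c) (h : CycleChoosable m a b c) :
    CycleChoosable m a b c' := by
  intro L hL hsep
  exact h L hL (fun u v huv hadj => le_trans (hsep u v huv hadj) hcc)

end SepChoos

namespace SepChoos
open Finset

lemma IG1 (p a b : ℕ) (hp : 1 ≤ p) (hb : 1 ≤ b) (hba : b ≤ a) (h2b : a < 2*b) :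
    IsGreatest {c | c ≤ a ∧ CycleChoosable (2*p+1) a b c} (a - b) := by
  constructor
  · exact ⟨by omega, cyc_simple p a b (a-b) hp hba le_rfl⟩
  · rintro c ⟨hca, hch⟩
    by_contra hlt
    push_neg at hlt
    have hch' : CycleChoosable (2*p+1) a b (a-b+1) := cyc_mono _ _ _ _ _ (by omega) hch
    refine neg_lemma p a b (a-b+1) hp (by omega) ?_ hch'
    have hs : a - (a-b+1) = b - 1 := by omega
    rw [hs]
    have h2 : (2*p+1)*(b-1) + (2*p+1) = (2*p+1)*b := by
      have h3 : (b-1)+1 = b := by omega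
      calc (2*p+1)*(b-1) + (2*p+1) = (2*p+1)*((b-1)+1) := by ring
        _ = (2*p+1)*b := by rw [h3]
    rcases Nat.lt_or_ge a (2*(b-1)) with h | h
    · rw [Nat.min_eq_left (by omega)]
      have h0 : a - a = 0 := by omega
      rw [h0, Nat.mul_zero, Nat.zero_add]
      omega
    · rw [Nat.min_eq_right (by omega)]
      have hk : a - 2*(b-1) ≤ 1 := by omega
      have h1 : p * (a - 2*(b-1)) ≤ p := by
        calc p * (a - 2*(b-1)) ≤ p * 1 := Nat.mul_le_mul_left p hk
          _ = p := Nat.mul_one p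
      omega

lemma IG2 (p a b : ℕ) (hp : 1 ≤ p) (hb : 1 ≤ b) (h2b : 2*b ≤ a) (hpa : p*a ≤ 2*p*b + b) :
    IsGreatest {c | c ≤ a ∧ CycleChoosable (2*p+1) a b c} (b + (p+1)*(a-2*b)) := by
  have hd : a = 2*b + (a - 2*b) := by omega
  have he : (p+1)*(a-2*b) = p*(a-2*b) + (a-2*b) := by ring
  have hpd : p*(a-2*b) ≤ b := by
    have h1 : p*a = 2*(p*b) + p*(a-2*b) := by
      calc p*a = p*(2*b + (a-2*b)) := by rw [← hd]
        _ = 2*(p*b) + p*(a-2*b) := by ring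
    have h2 : 2*p*b = 2*(p*b) := by ring
    omega
  constructor
  · exact ⟨by omega, cyc_main p a b _ hp hb h2b le_rfl⟩
  · rintro c ⟨hca, hch⟩
    by_contra hlt
    push_neg at hlt
    have hxa : (b + (p+1)*(a-2*b)) + 1 ≤ a := by omega
    have hch' : CycleChoosable (2*p+1) a b ((b + (p+1)*(a-2*b))+1) :=
      cyc_mono _ _ _ _ _ (by omega) hch
    refine neg_lemma p a b ((b + (p+1)*(a-2*b))+1) hp (by omega) ?_ hch'
    have hpd1 : p*(a-2*b) + 1 ≤ b := by omega
    have hsv : a - ((b + (p+1)*(a-2*b))+1) = b - (p*(a-2*b) + 1) := by omega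
    have h2s : 2*(a - ((b + (p+1)*(a-2*b))+1)) ≤ a := by omega
    rw [Nat.min_eq_right h2s]
    have hkval : a - 2*(a-((b + (p+1)*(a-2*b))+1)) = 2*(p*(a-2*b)) + (a-2*b) + 2 := by omega
    rw [hkval, hsv]
    have e1 : p*(2*(p*(a-2*b)) + (a-2*b) + 2) = 2*(p*(p*(a-2*b))) + p*(a-2*b) + 2*p := by ring
    have e2 : (2*p+1)*(b - (p*(a-2*b)+1)) + (2*p+1)*(p*(a-2*b)+1) = (2*p+1)*b := by
      have h3 : (b - (p*(a-2*b)+1)) + (p*(a-2*b)+1) = b := by omega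
      calc (2*p+1)*(b - (p*(a-2*b)+1)) + (2*p+1)*(p*(a-2*b)+1)
          = (2*p+1)*((b - (p*(a-2*b)+1)) + (p*(a-2*b)+1)) := by ring
        _ = (2*p+1)*b := by rw [h3]
    have e3 : (2*p+1)*(p*(a-2*b)+1) = 2*(p*(p*(a-2*b))) + p*(a-2*b) + 2*p + 1 := by ring
    omega

lemma IG3 (p a b : ℕ) (hp : 1 ≤ p) (hb : 1 ≤ b) (hpa : 2*p*b + b ≤ p*a) :
    IsGreatest {c | c ≤ a ∧ CycleChoosable (2*p+1) a b c} a := by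
  have h2b : 2*b ≤ a := by
    by_contra h
    push_neg at h
    have h1 : p*a + p ≤ 2*(p*b) := by
      have h4 := Nat.mul_le_mul_left p (show a+1 ≤ 2*b by omega)
      calc p*a + p = p*(a+1) := by ring
        _ ≤ p*(2*b) := h4
        _ = 2*(p*b) := by ring
    have h2 : 2*p*b = 2*(p*b) := by ring
    omega
  have hd : a = 2*b + (a-2*b) := by omega
  have hba : b ≤ p*(a-2*b) := by
    have h1 : p*a = 2*(p*b) + p*(a-2*b) := by
      calc p*a = p*(2*b+(a-2*b)) := by rw [← hd]
        _ = 2*(p*b) + p*(a-2*b) := by ring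
    have h2 : 2*p*b = 2*(p*b) := by ring
    omega
  have he : (p+1)*(a-2*b) = p*(a-2*b) + (a-2*b) := by ring
  constructor
  · exact ⟨le_rfl, cyc_main p a b a hp hb h2b (by omega)⟩
  · rintro c ⟨hca, _⟩
    exact hca

lemma tri_adj : ∀ u v : Fin 3, u ≠ v →
    (((u:ℕ) + 1) % 3 = (v:ℕ) ∨ ((v:ℕ) + 1) % 3 = (u:ℕ)) := by decide

lemma tri_iff (a b c : ℕ) : CompleteChoosable 3 a b c ↔ CycleChoosable 3 a b c := by
  constructor
  · intro h L hL hsep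
    obtain ⟨φ, h1, h2⟩ := h L hL (fun u v huv => hsep u v huv (tri_adj u v huv))
    exact ⟨φ, h1, fun u v huv _ => h2 u v huv⟩
  · intro h L hL hsep
    obtain ⟨φ, h1, h2⟩ := h L hL (fun u v huv _ => hsep u v huv)
    exact ⟨φ, h1, fun u v huv => h2 u v huv (tri_adj u v huv)⟩

end SepChoos

theorem sep_odd_cycle_and_K3 (p a b : ℕ) (hp : 1 ≤ p) (hb : 1 ≤ b) (hba : b ≤ a) :
    (a < 2 * b →
      IsGreatest {c | c ≤ a ∧ CycleChoosable (2 * p + 1) a b c} (a - b)) ∧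
    (2 * b ≤ a → p * a ≤ 2 * p * b + b →
      IsGreatest {c | c ≤ a ∧ CycleChoosable (2 * p + 1) a b c}
        (b + (p + 1) * (a - 2 * b))) ∧
    (2 * p * b + b ≤ p * a →
      IsGreatest {c | c ≤ a ∧ CycleChoosable (2 * p + 1) a b c} a) ∧
    (a < 2 * b →
      IsGreatest {c | c ≤ a ∧ CompleteChoosable 3 a b c} (a - b)) ∧
    (2 * b ≤ a → a < 3 * b →
      IsGreatest {c | c ≤ a ∧ CompleteChoosable 3 a b c} (2 * a - 3 * b)) ∧
    (3 * b ≤ a →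
      IsGreatest {c | c ≤ a ∧ CompleteChoosable 3 a b c} a) := by
  have hSeq : {c | c ≤ a ∧ CompleteChoosable 3 a b c} =
      {c | c ≤ a ∧ CycleChoosable 3 a b c} := by
    ext c
    simp only [Set.mem_setOf_eq, SepChoos.tri_iff]
  refine ⟨?_, ?_, ?_, ?_, ?_, ?_⟩
  · intro h
    exact SepChoos.IG1 p a b hp hb hba h
  · intro h1 h2
    exact SepChoos.IG2 p a b hp hb h1 h2
  · intro h
    exact SepChoos.IG3 p a b hp hb h
  · intro h
    rw [hSeq]
    exact SepChoos.IG1 1 a b le_rfl hb hba h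
  · intro h1 h2
    rw [hSeq]
    have hres := SepChoos.IG2 1 a b le_rfl hb h1 (by omega)
    have hval : b + (1+1)*(a-2*b) = 2*a - 3*b := by omega
    rw [hval] at hres
    exact hres
  · intro h
    rw [hSeq]
    exact SepChoos.IG3 1 a b le_rfl hb (by omega)
end
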